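/- arXiv:2402.00549 — 11 statements merged into one kernel-verified Lean document; each statement's English description precedes it below -/
import Mathlib

section
/- In a linearly ordered group (both left- and right-ordered), if f^n g^m = g^m f^n for some positive integers m, n, then fg = gf. -/
/-!
Multiplying on either side preserves strict inequalities, so `a * x < x * a` is stable under
products in `x`, and likewise `x * b < b * x`. Hence `f * g < g * f` forces
`f ^ n * g ^ m < g ^ m * f ^ n`, and symmetrically for `>`; by trichotomy, commuting powers
leave only `f * g = g * f`.
-/

section

variable {M : Type*} [Monoid M] [Preorder M] [MulLeftStrictMono M] [MulRightStrictMono M]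
  {a b : M} {m n : ℕ}

theorem mul_pow_lt_pow_mul (h : a * b < b * a) (hn : 0 < n) : a * b ^ n < b ^ n * a := by
  induction n, hn using Nat.le_induction with
  | base => simpa using h
  | succ k _ ih => calc
      a * b ^ (k + 1) = a * b ^ k * b := by rw [pow_succ, mul_assoc]
      _ < b ^ k * a * b := mul_lt_mul_left ih b
      _ = b ^ k * (a * b) := mul_assoc ..
      _ < b ^ k * (b * a) := mul_lt_mul_right h _
      _ = b ^ (k + 1) * a := by rw [pow_succ, mul_assoc]

theorem pow_mul_lt_mul_pow (h : a * b < b * a) (hn : 0 < n) : a ^ n * b < b * a ^ n := by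
  induction n, hn using Nat.le_induction with
  | base => simpa using h
  | succ k _ ih => calc
      a ^ (k + 1) * b = a ^ k * (a * b) := by rw [pow_succ, mul_assoc]
      _ < a ^ k * (b * a) := mul_lt_mul_right h _
      _ = a ^ k * b * a := (mul_assoc ..).symm
      _ < b * a ^ k * a := mul_lt_mul_left ih a
      _ = b * a ^ (k + 1) := by rw [pow_succ, mul_assoc]

theorem pow_mul_pow_lt_pow_mul_pow (h : a * b < b * a) (hm : 0 < m) (hn : 0 < n) :
    a ^ n * b ^ m < b ^ m * a ^ n :=
  pow_mul_lt_mul_pow (mul_pow_lt_pow_mul h hm) hn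

end

theorem stmt_0 {G : Type*} [Group G] [LinearOrder G]
    [CovariantClass G G (· * ·) (· < ·)]
    [CovariantClass G G (Function.swap (· * ·)) (· < ·)]
    (f g : G) (m n : ℕ) (hm : 0 < m) (hn : 0 < n)
    (h : f ^ n * g ^ m = g ^ m * f ^ n) :
    f * g = g * f := by
  rcases lt_trichotomy (f * g) (g * f) with hlt | heq | hgt
  · exact absurd h (pow_mul_pow_lt_pow_mul_pow hlt hm hn).ne
  · exact heq
  · exact absurd h.symm (pow_mul_pow_lt_pow_mul_pow hgt hn hm).ne
end

section
/- In a linearly ordered group, if f^m = g^n for nonzero integers m, n, then f is the unique element with that property and f commutes with g. -/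
theorem Commute.of_zpow_left {G : Type*} [Group G] [IsMulTorsionFree G] {a b : G} {n : ℤ}
    (hn : n ≠ 0) (h : Commute (a ^ n) b) : Commute a b := by
  have hconj : (b * a * b⁻¹) ^ n = a ^ n := by
    rw [conj_zpow, h.symm.eq, mul_inv_cancel_right]
  have := zpow_left_injective hn hconj
  rwa [mul_inv_eq_iff_eq_mul, eq_comm] at this

theorem stmt_1_general {G : Type*} [Group G] [LinearOrder G]
    [CovariantClass G G (· * ·) (· < ·)]
    [CovariantClass G G (Function.swap (· * ·)) (· < ·)]
    (f g : G) (m n : ℤ) (hm : m ≠ 0)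
    (h : f ^ m = g ^ n) :
    (∀ f' : G, f' ^ m = g ^ n → f' = f) ∧ f * g = g * f := by
  -- Both-sided invariance makes `x ↦ x ^ m` strictly monotone, so `G` is `IsMulTorsionFree`.
  refine ⟨fun f' hf' => zpow_left_injective hm (hf'.trans h.symm), ?_⟩
  have hpow_comm : Commute (f ^ m) g := h ▸ Commute.zpow_self g n
  exact Commute.of_zpow_left hm hpow_comm

theorem stmt_1 {G : Type*} [Group G] [LinearOrder G]
    [CovariantClass G G (· * ·) (· < ·)]
    [CovariantClass G G (Function.swap (· * ·)) (· < ·)]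
    (f g : G) (m n : ℤ) (hm : m ≠ 0) (hn : n ≠ 0)
    (h : f ^ m = g ^ n) :
    (∀ f' : G, f' ^ m = g ^ n → f' = f) ∧ f * g = g * f :=
  stmt_1_general f g m n hm h
end

section
/- If an ordered group G has Archimedean centralisers (the centraliser of every non-identity element is an Archimedean ordered group), then G satisfies GOG1: for all f, g > 1 with f ≥ g and all g₀ in the centraliser of g, there exists f₀ in the centraliser of f with f₀ ≥ g₀. -/
namespace GOG

variable {α : Type*}

/-- Centraliser of `g` with respect to an abstract multiplication. -/
def Cent (mul : α → α → α) (g : α) : Set α := {h | mul h g = mul g h}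

/-- `f ≼ g`: `f` lies in the convex hull of the centraliser of `g` (or `f = 1`). -/
def Preceq (mul : α → α → α) (one : α) (le : α → α → Prop) (f g : α) : Prop :=
  f = one ∨ (g ≠ one ∧ ∃ a ∈ Cent mul g, ∃ b ∈ Cent mul g, le a f ∧ le f b)

/-- Strict part `f ≺ g`. -/
def Prec (mul : α → α → α) (one : α) (le : α → α → Prop) (f g : α) : Prop :=
  Preceq mul one le f g ∧ ¬ Preceq mul one le g f

/-- `f ≍ g`. -/
def Asymp (mul : α → α → α) (one : α) (le : α → α → Prop) (f g : α) : Prop :=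
  Preceq mul one le f g ∧ Preceq mul one le g f

/-- `g ∼ h` iff `g h⁻¹ ≺ g`. -/
def Sim (mul : α → α → α) (one : α) (inv : α → α) (le : α → α → Prop) (g h : α) : Prop :=
  Prec mul one le (mul g (inv h)) g

/-- Axiom GOG1. -/
def GOG1 (mul : α → α → α) (one : α) (lt le : α → α → Prop) : Prop :=
  ∀ f g : α, lt one f → lt one g → le g f →
    ∀ g₀ ∈ Cent mul g, ∃ f₀ ∈ Cent mul f, le g₀ f₀

/-- Axiom GOG2: if `f > C(g)` then `f g > g f`. -/
def GOG2 (mul : α → α → α) (one : α) (lt : α → α → Prop) : Prop :=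
  ∀ f g : α, lt one f → lt one g → (∀ h ∈ Cent mul g, lt h f) → lt (mul g f) (mul f g)

/-- `s` is a scaling element. -/
def Scaling (mul : α → α → α) (one : α) (inv : α → α) (lt le : α → α → Prop) (s : α) : Prop :=
  lt one s ∧ (∀ a ∈ Cent mul s, ∀ b ∈ Cent mul s, mul a b = mul b a) ∧
    ∀ f : α, Asymp mul one le f s → ∃ g ∈ Cent mul s, g ≠ one ∧ Sim mul one inv le g f

/-- Axiom GOG3: every growth rank contains a scaling element. -/
def GOG3 (mul : α → α → α) (one : α) (inv : α → α) (lt le : α → α → Prop) : Prop :=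
  ∀ g : α, g ≠ one → ∃ s : α, Scaling mul one inv lt le s ∧ Asymp mul one le s g

/-- Being a (bi-ordered) linearly ordered group, for abstract operations. -/
def IsOrderedGroup (mul : α → α → α) (one : α) (inv : α → α) (lt : α → α → Prop) : Prop :=
  (∀ a b c : α, mul (mul a b) c = mul a (mul b c)) ∧
    (∀ a : α, mul one a = a) ∧ (∀ a : α, mul a one = a) ∧
    (∀ a : α, mul (inv a) a = one) ∧
    (∀ a : α, ¬ lt a a) ∧ (∀ a b c : α, lt a b → lt b c → lt a c) ∧
    (∀ a b : α, lt a b ∨ a = b ∨ lt b a) ∧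
    (∀ f g h : α, lt g h → lt (mul f g) (mul f h) ∧ lt (mul g f) (mul h f))

/-- Growth order group: ordered group satisfying GOG1, GOG2 and GOG3. -/
def IsGrowthOrderGroup (mul : α → α → α) (one : α) (inv : α → α) (lt le : α → α → Prop) : Prop :=
  IsOrderedGroup mul one inv lt ∧ GOG1 mul one lt le ∧ GOG2 mul one lt ∧
    GOG3 mul one inv lt le

end GOG

theorem zpow_le_pow_natAbs {G : Type*} [Group G] [Preorder G] [MulLeftMono G] {g : G}
    (hg : 1 ≤ g) (n : ℤ) : g ^ n ≤ g ^ n.natAbs := by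
  cases n with
  | ofNat k => simp
  | negSucc k =>
    rw [zpow_negSucc, Int.natAbs_negSucc]
    exact (inv_le_one'.mpr (one_le_pow_of_one_le' hg _)).trans (one_le_pow_of_one_le' hg _)

theorem GOG.pow_mem_cent {M : Type*} [Monoid M] (f : M) (n : ℕ) :
    f ^ n ∈ GOG.Cent (· * ·) f :=
  (Commute.pow_self f n).eq

theorem stmt_2 {G : Type*} [Group G] [LinearOrder G]
    [CovariantClass G G (· * ·) (· < ·)]
    [CovariantClass G G (Function.swap (· * ·)) (· < ·)]
    (harch : ∀ g : G, g ≠ 1 → ∀ a ∈ GOG.Cent (· * ·) g, ∀ b ∈ GOG.Cent (· * ·) g,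
      a ≠ 1 → b ≠ 1 → ∃ n : ℤ, b ≤ a ^ n) :
    GOG.GOG1 (· * ·) (1 : G) (· < ·) (· ≤ ·) := by
  have := mulLeftMono_of_mulLeftStrictMono G
  have := mulRightMono_of_mulRightStrictMono G
  intro f g _ hg hgf g₀ hg₀
  rcases eq_or_ne g₀ 1 with rfl | hg₀_ne
  · exact ⟨1, (Commute.one_left f).eq, le_rfl⟩
  obtain ⟨n, hn⟩ := harch g hg.ne' g rfl g₀ hg₀ hg.ne' hg₀_ne
  exact ⟨f ^ n.natAbs, GOG.pow_mem_cent f _,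
    hn.trans ((zpow_le_pow_natAbs hg.le n).trans (pow_le_pow_left' hgf _))⟩
end

section
/- Let G be an ordered group satisfying GOG1 with quasi-order ≼ and strict relation ≺ (f ≺ g iff f ≼ g and not g ≼ f). If g ≺ h then gh ≍ h and hg ≍ h. -/
/-!
Inversion preserves `≼` (it maps `C(g)` onto itself and reverses the order) and sends the pair `(g, h)`
to `(g⁻¹, h⁻¹)` with `g⁻¹ h⁻¹ = (h g)⁻¹`, so we may assume `h > 1`. As `h ⋠ g`, `h` then exceeds every
element of `C(g)`, in particular `g⁻²`; hence `h = g⁻¹ (g h) < (g h)²`, so `h` lies between the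
elements `1` and `(g h)²` of `C(g h)`, i.e. `h ≼ g h`. Conversely, `a ≤ g ≤ b` with `a, b ∈ C(h)` gives
`a h ≤ g h ≤ b h` with `a h, b h ∈ C(h)`. The same works for `h g`.
-/

namespace GOG

variable {G : Type*} [Group G]

local infix:50 " ≼ " => Preceq (· * ·) 1 (· ≤ ·)

section Preorder

variable [Preorder G]

theorem one_preceq (g : G) : 1 ≼ g := Or.inl rfl

-- Membership in `Cent (· * ·) x` is definitionally `Commute · x`.
theorem preceq_of_le_of_le {f x a b : G} (hx : x ≠ 1) (ha : Commute a x) (hb : Commute b x)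
    (haf : a ≤ f) (hfb : f ≤ b) : f ≼ x :=
  Or.inr ⟨hx, a, ha, b, hb, haf, hfb⟩

theorem preceq_refl (f : G) : f ≼ f := by
  rcases eq_or_ne f 1 with hf | hf
  · exact Or.inl hf
  · exact preceq_of_le_of_le hf (.refl f) (.refl f) le_rfl le_rfl

theorem ne_one_of_prec {g h : G} (hgh : Prec (· * ·) 1 (· ≤ ·) g h) : h ≠ 1 := by
  rintro rfl
  exact hgh.2 (one_preceq g)

theorem preceq_of_one_le_of_lt_mul_self {h x : G} (h1 : 1 ≤ h) (h2 : h < x * x) : h ≼ x := by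
  have hx : x ≠ 1 := by
    rintro rfl
    exact (by simpa using h2 : h < 1).not_ge h1
  exact preceq_of_le_of_le hx (.one_left x) ((Commute.refl x).mul_left (.refl x)) h1 h2.le

theorem lt_mul_mul_self_of_inv_mul_inv_lt [MulLeftStrictMono G] [MulRightStrictMono G] {g h : G}
    (hgh : g⁻¹ * g⁻¹ < h) : h < g * h * (g * h) ∧ h < h * g * (h * g) := by
  have hgh_left : g⁻¹ < g * h := by simpa using mul_lt_mul_right hgh g
  have hhg_right : g⁻¹ < h * g := by simpa using mul_lt_mul_left hgh g
  constructor
  · simpa using mul_lt_mul_left hgh_left (g * h)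
  · simpa using mul_lt_mul_right hhg_right (h * g)

variable [MulLeftMono G] [MulRightMono G]

theorem preceq_inv_inv_iff {f g : G} : f⁻¹ ≼ g⁻¹ ↔ f ≼ g := by
  suffices key : ∀ f g : G, f ≼ g → f⁻¹ ≼ g⁻¹ from
    ⟨fun h ↦ by simpa using key _ _ h, key f g⟩
  rintro f g (rfl | ⟨hg, a, ha, b, hb, haf, hfb⟩)
  · simpa using one_preceq g⁻¹
  · exact preceq_of_le_of_le (inv_ne_one.mpr hg) (Commute.inv_inv hb) (Commute.inv_inv ha)
      (inv_le_inv_iff.mpr hfb) (inv_le_inv_iff.mpr haf)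

theorem asymp_inv_inv_iff {f g : G} :
    Asymp (· * ·) 1 (· ≤ ·) f⁻¹ g⁻¹ ↔ Asymp (· * ·) 1 (· ≤ ·) f g := by
  simp only [Asymp, preceq_inv_inv_iff]

theorem Prec.inv {f g : G} (hfg : Prec (· * ·) 1 (· ≤ ·) f g) :
    Prec (· * ·) 1 (· ≤ ·) f⁻¹ g⁻¹ := by
  simpa only [Prec, preceq_inv_inv_iff] using hfg

theorem mul_preceq_of_commute {f h c : G} (hh : h ≠ 1) (hf : f ≼ h) (hc : Commute c h) :
    f * c ≼ h ∧ c * f ≼ h := by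
  rcases hf with rfl | ⟨-, a, (ha : Commute a h), b, (hb : Commute b h), haf, hfb⟩
  · simpa using preceq_of_le_of_le hh hc hc le_rfl le_rfl
  · exact ⟨preceq_of_le_of_le hh (ha.mul_left hc) (hb.mul_left hc)
        (mul_le_mul_left haf c) (mul_le_mul_left hfb c),
      preceq_of_le_of_le hh (hc.mul_left ha) (hc.mul_left hb)
        (mul_le_mul_right haf c) (mul_le_mul_right hfb c)⟩

end Preorder

section LinearOrder

variable [LinearOrder G]

theorem lt_of_not_preceq {g h c : G} (hg : g ≠ 1) (hh : 1 ≤ h) (hhg : ¬ h ≼ g)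
    (hc : Commute c g) : c < h :=
  lt_of_not_ge fun hhc ↦ hhg (preceq_of_le_of_le hg (.one_left g) hc hh hhc)

variable [MulLeftMono G] [MulRightMono G]

theorem asymp_of_prec_of_one_lt {g h : G} (hgh : Prec (· * ·) 1 (· ≤ ·) g h) (hh : 1 < h) :
    Asymp (· * ·) 1 (· ≤ ·) (g * h) h ∧ Asymp (· * ·) 1 (· ≤ ·) (h * g) h := by
  rcases eq_or_ne g 1 with rfl | hg
  · simp [Asymp, preceq_refl]
  have hg_inv : Commute g⁻¹ g := (Commute.refl g).inv_left
  have hbound : g⁻¹ * g⁻¹ < h := lt_of_not_preceq hg hh.le hgh.2 (hg_inv.mul_left hg_inv)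
  obtain ⟨hgh_sq, hhg_sq⟩ := lt_mul_mul_self_of_inv_mul_inv_lt hbound
  obtain ⟨hgh_le, hhg_le⟩ := mul_preceq_of_commute hh.ne' hgh.1 (.refl h)
  exact ⟨⟨hgh_le, preceq_of_one_le_of_lt_mul_self hh.le hgh_sq⟩,
    ⟨hhg_le, preceq_of_one_le_of_lt_mul_self hh.le hhg_sq⟩⟩

end LinearOrder

end GOG

theorem stmt_5_general {G : Type*} [Group G] [LinearOrder G]
    [CovariantClass G G (· * ·) (· < ·)]
    [CovariantClass G G (Function.swap (· * ·)) (· < ·)]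
    (g h : G) (hgh : GOG.Prec (· * ·) (1 : G) (· ≤ ·) g h) :
    GOG.Asymp (· * ·) (1 : G) (· ≤ ·) (g * h) h ∧
    GOG.Asymp (· * ·) (1 : G) (· ≤ ·) (h * g) h := by
  have := mulLeftMono_of_mulLeftStrictMono G
  have := mulRightMono_of_mulRightStrictMono G
  rcases (GOG.ne_one_of_prec hgh).lt_or_gt with hh | hh
  · have key := GOG.asymp_of_prec_of_one_lt hgh.inv (one_lt_inv'.mpr hh)
    rw [← mul_inv_rev, ← mul_inv_rev, GOG.asymp_inv_inv_iff, GOG.asymp_inv_inv_iff] at key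
    exact key.symm
  · exact GOG.asymp_of_prec_of_one_lt hgh hh

theorem stmt_5 {G : Type*} [Group G] [LinearOrder G]
    [CovariantClass G G (· * ·) (· < ·)]
    [CovariantClass G G (Function.swap (· * ·)) (· < ·)]
    (h1 : GOG.GOG1 (· * ·) (1 : G) (· < ·) (· ≤ ·))
    (g h : G) (hgh : GOG.Prec (· * ·) (1 : G) (· ≤ ·) g h) :
    GOG.Asymp (· * ·) (1 : G) (· ≤ ·) (g * h) h ∧
    GOG.Asymp (· * ·) (1 : G) (· ≤ ·) (h * g) h :=
  stmt_5_general g h hgh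
end

section
/- Let G be an ordered group satisfying GOG1. For each f ≠ 1, the set {g > 1 : g ≍ f} is a convex subset of G. -/
/-! The bound `j ≼ f` is inherited directly: `C(f)` has an element below `a` and one above `b`,
and these bracket `j`. For `f ≼ j`, GOG1 bounds every element of `C(a)` from above by
an element of `C(j)` when `1 < a ≤ j`; as centralisers are closed under inversion, it also bounds it
from below, so the convex hull of `C(a)` lies in that of `C(j)`. -/

namespace GOG

theorem mem_cent_iff_commute {G : Type*} [Mul G] {g h : G} :
    h ∈ Cent (· * ·) g ↔ Commute h g :=
  Iff.rfl

theorem inv_mem_cent {G : Type*} [Group G] {g c : G} (hc : c ∈ Cent (· * ·) g) :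
    c⁻¹ ∈ Cent (· * ·) g :=
  (mem_cent_iff_commute.mp hc).inv_left

theorem preceq_of_le_of_le_s6 {α : Type*} [Mul α] [One α] [Preorder α] {a b j f : α}
    (ha : a ≠ 1) (haf : Preceq (· * ·) 1 (· ≤ ·) a f)
    (hb : b ≠ 1) (hbf : Preceq (· * ·) 1 (· ≤ ·) b f) (haj : a ≤ j) (hjb : j ≤ b) :
    Preceq (· * ·) 1 (· ≤ ·) j f := by
  obtain ha1 | ⟨hf, c, hc, -, -, hca, -⟩ := haf
  · exact absurd ha1 ha
  obtain hb1 | ⟨-, -, -, d, hd, -, hbd⟩ := hbf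
  · exact absurd hb1 hb
  exact Or.inr ⟨hf, c, hc, d, hd, hca.trans haj, hjb.trans hbd⟩

section GOG1

variable {G : Type*} [Group G] [Preorder G] [MulLeftMono G] [MulRightMono G]

theorem GOG1.exists_cent_le (h1 : GOG1 (· * ·) (1 : G) (· < ·) (· ≤ ·)) {a j c : G}
    (ha : 1 < a) (haj : a ≤ j) (hc : c ∈ Cent (· * ·) a) :
    ∃ e ∈ Cent (· * ·) j, e ≤ c := by
  obtain ⟨e, he, hce⟩ := h1 j a (ha.trans_le haj) ha haj c⁻¹ (inv_mem_cent hc)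
  exact ⟨e⁻¹, inv_mem_cent he, by simpa using inv_le_inv_iff.mpr hce⟩

theorem GOG1.preceq_of_le (h1 : GOG1 (· * ·) (1 : G) (· < ·) (· ≤ ·)) {a j f : G}
    (ha : 1 < a) (haj : a ≤ j) (hfa : Preceq (· * ·) 1 (· ≤ ·) f a) :
    Preceq (· * ·) 1 (· ≤ ·) f j := by
  obtain hf1 | ⟨-, c, hc, d, hd, hcf, hfd⟩ := hfa
  · exact Or.inl hf1
  have hj : 1 < j := ha.trans_le haj
  obtain ⟨c', hc', hc'c⟩ := h1.exists_cent_le ha haj hc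
  obtain ⟨d', hd', hdd'⟩ := h1 j a hj ha haj d hd
  exact Or.inr ⟨hj.ne', c', hc', d', hd', hc'c.trans hcf, hfd.trans hdd'⟩

end GOG1

end GOG

theorem stmt_6_general {G : Type*} [Group G] [LinearOrder G]
    [CovariantClass G G (· * ·) (· < ·)]
    [CovariantClass G G (Function.swap (· * ·)) (· < ·)]
    (h1 : GOG.GOG1 (· * ·) (1 : G) (· < ·) (· ≤ ·))
    (f : G) :
    ∀ a b j : G, 1 < a → GOG.Asymp (· * ·) (1 : G) (· ≤ ·) a f →
      1 < b → GOG.Asymp (· * ·) (1 : G) (· ≤ ·) b f →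
      a ≤ j → j ≤ b →
      1 < j ∧ GOG.Asymp (· * ·) (1 : G) (· ≤ ·) j f := by
  intro a b j ha haf hb hbf haj hjb
  have := mulLeftMono_of_mulLeftStrictMono G
  have := mulRightMono_of_mulRightStrictMono G
  exact ⟨ha.trans_le haj,
    GOG.preceq_of_le_of_le_s6 ha.ne' haf.1 hb.ne' hbf.1 haj hjb,
    h1.preceq_of_le ha haj haf.2⟩

theorem stmt_6 {G : Type*} [Group G] [LinearOrder G]
    [CovariantClass G G (· * ·) (· < ·)]
    [CovariantClass G G (Function.swap (· * ·)) (· < ·)]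
    (h1 : GOG.GOG1 (· * ·) (1 : G) (· < ·) (· ≤ ·))
    (f : G) (hf : f ≠ 1) :
    ∀ a b j : G, 1 < a → GOG.Asymp (· * ·) (1 : G) (· ≤ ·) a f →
      1 < b → GOG.Asymp (· * ·) (1 : G) (· ≤ ·) b f →
      a ≤ j → j ≤ b →
      1 < j ∧ GOG.Asymp (· * ·) (1 : G) (· ≤ ·) j f :=
  stmt_6_general h1 f
end

section
/- Let G be an ordered group satisfying GOG1, and define g ∼ h (for g, h ≠ 1) iff gh⁻¹ ≺ g. Then the following are equivalent: (a) g ∼ h; (b) gh⁻¹ ≺ h; (c) hg⁻¹ ≺ g; (d) h ∼ g. -/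
/-!
Write `|x|` for `max x x⁻¹`. Since `|x|` commutes with `x`, the interval `[|x|⁻¹, |x|]` lies in
the convex hull of `C(x)`; hence `|f| ≤ |h|` gives `f ≼ h`, and `|h| ≤ |f|` gives `f h ≼ f`
(translate `h ∈ [|f|⁻¹, |f|]` by `f ∈ C(f)`). So if `f h ⋠ f` then `|f| < |h|`, whence `f ≼ h`,
while `h ≼ f` would give `f h ≼ f`: thus `f h ⋠ f` implies `f ≺ h`. Applied to `f = g h⁻¹` this
proves (a) ⇒ (b), and symmetrically (d) ⇒ (c). Finally `≺` is insensitive to inverting its left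
argument, which turns (a) into (c) and (b) into (d).
-/

namespace GOG

variable {G : Type*} [Group G] [LinearOrder G]

local infix:50 " ≼ " => Preceq (· * ·) (1 : _) (· ≤ ·)
local infix:50 " ≺ " => Prec (· * ·) (1 : _) (· ≤ ·)

theorem commute_mabs_self (a : G) : Commute |a|ₘ a := by
  rcases mabs_choice a with h | h <;> rw [h]
  exact (Commute.refl a).inv_left

theorem preceq_of_commute {f g a b : G} (hg : g ≠ 1) (ha : Commute a g) (hb : Commute b g)
    (haf : a ≤ f) (hfb : f ≤ b) : f ≼ g :=
  Or.inr ⟨hg, a, ha, b, hb, haf, hfb⟩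

theorem preceq_inv_right_iff {f g : G} : f ≼ g⁻¹ ↔ f ≼ g := by
  refine or_congr_right (and_congr inv_ne_one ?_)
  change (∃ a, Commute a g⁻¹ ∧ ∃ b, Commute b g⁻¹ ∧ _) ↔ ∃ a, Commute a g ∧ ∃ b, Commute b g ∧ _
  simp only [Commute.inv_right_iff]

variable [MulLeftMono G] [MulRightMono G]

theorem preceq_inv_left {f g : G} (hfg : f ≼ g) : f⁻¹ ≼ g := by
  rcases hfg with rfl | ⟨hg, a, ha, b, hb, haf, hfb⟩
  · exact Or.inl inv_one
  · exact preceq_of_commute hg (Commute.inv_left hb) (Commute.inv_left ha)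
      (inv_le_inv_iff.mpr hfb) (inv_le_inv_iff.mpr haf)

theorem preceq_inv_left_iff {f g : G} : f⁻¹ ≼ g ↔ f ≼ g :=
  ⟨fun h => inv_inv f ▸ preceq_inv_left h, preceq_inv_left⟩

theorem prec_inv_left_iff {f g : G} : f⁻¹ ≺ g ↔ f ≺ g := by
  rw [Prec, Prec, preceq_inv_left_iff, preceq_inv_right_iff]

theorem preceq_of_mabs_le_mabs {f h : G} (hfh : |f|ₘ ≤ |h|ₘ) : f ≼ h := by
  rcases eq_or_ne h 1 with rfl | hh
  · exact Or.inl (mabs_le_one.mp (by simpa using hfh))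
  obtain ⟨hf, hf'⟩ := mabs_le'.mp hfh
  exact preceq_of_commute hh (commute_mabs_self h).inv_left (commute_mabs_self h)
    (inv_le'.mp hf') hf

theorem preceq_mul_left_of_mabs_le_mabs {f h : G} (hhf : |h|ₘ ≤ |f|ₘ) : f * h ≼ f := by
  rcases eq_or_ne f 1 with rfl | hf
  · exact Or.inl (by simpa using hhf)
  obtain ⟨hh, hh'⟩ := mabs_le'.mp hhf
  exact preceq_of_commute hf ((Commute.refl f).mul_left (commute_mabs_self f).inv_left)
    ((Commute.refl f).mul_left (commute_mabs_self f))
    (mul_le_mul_right (inv_le'.mp hh') f) (mul_le_mul_right hh f)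

theorem preceq_mul_left_of_preceq {f h : G} (hhf : h ≼ f) : f * h ≼ f := by
  rcases hhf with rfl | ⟨hf, a, ha, b, hb, hah, hhb⟩
  · rw [mul_one]
    exact preceq_of_mabs_le_mabs le_rfl
  · exact preceq_of_commute hf ((Commute.refl f).mul_left ha) ((Commute.refl f).mul_left hb)
      (mul_le_mul_right hah f) (mul_le_mul_right hhb f)

theorem prec_of_not_preceq_mul_left {f h : G} (hfh : ¬ f * h ≼ f) : f ≺ h :=
  ⟨preceq_of_mabs_le_mabs (not_le.mp (mt preceq_mul_left_of_mabs_le_mabs hfh)).le,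
    mt preceq_mul_left_of_preceq hfh⟩

theorem prec_of_sim {g h : G} (hgh : Sim (· * ·) 1 (·⁻¹) (· ≤ ·) g h) : g * h⁻¹ ≺ h :=
  prec_of_not_preceq_mul_left (by rw [inv_mul_cancel_right]; exact hgh.2)

end GOG

theorem stmt_7_general {G : Type*} [Group G] [LinearOrder G]
    [CovariantClass G G (· * ·) (· < ·)]
    [CovariantClass G G (Function.swap (· * ·)) (· < ·)]
    (g h : G) :
    [GOG.Sim (· * ·) (1 : G) (·⁻¹) (· ≤ ·) g h,
     GOG.Prec (· * ·) (1 : G) (· ≤ ·) (g * h⁻¹) h,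
     GOG.Prec (· * ·) (1 : G) (· ≤ ·) (h * g⁻¹) g,
     GOG.Sim (· * ·) (1 : G) (·⁻¹) (· ≤ ·) h g].TFAE := by
  have := mulLeftMono_of_mulLeftStrictMono G
  have := mulRightMono_of_mulRightStrictMono G
  have hinv : (g * h⁻¹)⁻¹ = h * g⁻¹ := by group
  tfae_have 1 ↔ 3 := by
    rw [GOG.Sim, ← GOG.prec_inv_left_iff, hinv]
  tfae_have 2 ↔ 4 := by
    rw [GOG.Sim, ← GOG.prec_inv_left_iff, hinv]
  tfae_have 1 → 2 := GOG.prec_of_sim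
  tfae_have 4 → 3 := GOG.prec_of_sim
  tfae_finish

theorem stmt_7 {G : Type*} [Group G] [LinearOrder G]
    [CovariantClass G G (· * ·) (· < ·)]
    [CovariantClass G G (Function.swap (· * ·)) (· < ·)]
    (h1 : GOG.GOG1 (· * ·) (1 : G) (· < ·) (· ≤ ·))
    (g h : G) (hg : g ≠ 1) (hh : h ≠ 1) :
    [GOG.Sim (· * ·) (1 : G) (·⁻¹) (· ≤ ·) g h,
     GOG.Prec (· * ·) (1 : G) (· ≤ ·) (g * h⁻¹) h,
     GOG.Prec (· * ·) (1 : G) (· ≤ ·) (h * g⁻¹) g,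
     GOG.Sim (· * ·) (1 : G) (·⁻¹) (· ≤ ·) h g].TFAE :=
  stmt_7_general g h
end

section
/- Let G be an ordered group satisfying GOG1. The relation ∼ on G \ {1} defined by g ∼ h iff gh⁻¹ ≺ g is an equivalence relation. -/
theorem Commute.of_mul_self_right {G : Type*} [Group G] [IsMulTorsionFree G] {c m : G}
    (h : Commute c (m * m)) : Commute c m := by
  have hconj : (c * m * c⁻¹) ^ 2 = m ^ 2 := by
    rw [conj_pow, pow_two, h.eq, mul_inv_cancel_right]
  have := pow_left_injective two_ne_zero hconj
  rwa [mul_inv_eq_iff_eq_mul] at this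

section LinearOrder

variable {G : Type*} [Group G] [LinearOrder G] {a c f g : G}

theorem commute_mabs_right_iff : Commute c |a|ₘ ↔ Commute c a := by
  rcases mabs_choice a with ha | ha <;> rw [ha]
  exact Commute.inv_right_iff

theorem Commute.max_left (hc : Commute c g) (hf : Commute f g) : Commute (max c f) g := by
  rcases max_choice c f with h | h <;> rw [h] <;> assumption

theorem mabs_mul_le_mul_self [MulLeftMono G] [MulRightMono G] {x y M : G} (hx : |x|ₘ ≤ M)
    (hy : |y|ₘ ≤ M) : |x * y|ₘ ≤ M * M := by
  rw [mabs_le'] at hx hy ⊢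
  exact ⟨mul_le_mul' hx.1 hy.1, mul_inv_rev x y ▸ mul_le_mul' hy.2 hx.2⟩

end LinearOrder

namespace GOG

section ConvexCentralizer

variable {G : Type*} [Group G] [LinearOrder G] [MulLeftMono G] [MulRightMono G]
  {a b f g h x y : G}

/-- The convex hull of the centraliser of `g` (the set `K g` of the paper); the centraliser is
a subgroup, so `x` lies in its convex hull iff `|x|ₘ` is bounded by an element of it. -/
def convexCentralizer (g : G) : Subgroup G where
  carrier := {x | ∃ c, Commute c g ∧ |x|ₘ ≤ c}
  one_mem' := ⟨1, Commute.one_left g, mabs_one.le⟩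
  mul_mem' := by
    rintro x y ⟨c, hc, hxc⟩ ⟨e, he, hye⟩
    have hce := Commute.max_left hc he
    exact ⟨_, hce.mul_left hce,
      mabs_mul_le_mul_self (hxc.trans (le_max_left c e)) (hye.trans (le_max_right c e))⟩
  inv_mem' := by
    rintro x ⟨c, hc, hxc⟩
    exact ⟨c, hc, (mabs_inv x).symm ▸ hxc⟩

theorem mem_convexCentralizer_iff :
    x ∈ convexCentralizer g ↔ ∃ a ∈ Cent (· * ·) g, ∃ b ∈ Cent (· * ·) g, a ≤ x ∧ x ≤ b := by
  constructor
  · rintro ⟨c, hc, hxc⟩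
    exact ⟨c⁻¹, hc.inv_left.eq, c, hc.eq, inv_le'.1 ((inv_le_mabs x).trans hxc),
      (le_mabs_self x).trans hxc⟩
  · rintro ⟨a, ha, b, hb, hax, hxb⟩
    exact ⟨max b a⁻¹, Commute.max_left hb (Commute.inv_left ha),
      mabs_le'.2 ⟨hxb.trans (le_max_left _ _), (inv_le_inv_iff.2 hax).trans (le_max_right _ _)⟩⟩

theorem mem_convexCentralizer_self (g : G) : g ∈ convexCentralizer g :=
  ⟨|g|ₘ, (commute_mabs_right_iff.2 (Commute.refl g)).symm, le_rfl⟩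

theorem convexCentralizer_inv (g : G) : convexCentralizer g⁻¹ = convexCentralizer g := by
  ext x
  exact exists_congr fun c => and_congr_left' Commute.inv_right_iff

theorem convexCentralizer_le_of_notMem {p q : G} (hp : f ∉ convexCentralizer p)
    (hq : f ∈ convexCentralizer q) : convexCentralizer p ≤ convexCentralizer q := by
  obtain ⟨e, he, hfe⟩ := hq
  rintro x ⟨c, hc, hxc⟩
  have hce : c ≤ e := le_of_not_gt fun hec => hp ⟨c, hc, hfe.trans hec.le⟩
  exact ⟨e, he, hxc.trans hce⟩

theorem preceq_iff :
    Preceq (· * ·) 1 (· ≤ ·) x y ↔ x = 1 ∨ (y ≠ 1 ∧ x ∈ convexCentralizer y) := by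
  rw [mem_convexCentralizer_iff]
  rfl

theorem prec_iff_notMem (hx : x ≠ 1) (hy : y ≠ 1) :
    Prec (· * ·) 1 (· ≤ ·) x y ↔ y ∉ convexCentralizer x := by
  simp only [Prec, preceq_iff, hx, hy, ne_eq, not_false_eq_true, true_and, false_or]
  refine ⟨And.right, fun hyx => ⟨?_, hyx⟩⟩
  exact convexCentralizer_le_of_notMem hyx (mem_convexCentralizer_self y)
    (mem_convexCentralizer_self x)

theorem sim_iff (hg : g ≠ 1) :
    Sim (· * ·) 1 (·⁻¹) (· ≤ ·) g h ↔ g = h ∨ g ∉ convexCentralizer (g * h⁻¹) := by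
  by_cases hgh : g = h
  · subst hgh
    simp only [Sim, mul_inv_cancel, Prec, preceq_iff, hg, true_or, true_and, false_or,
      ne_eq, not_true_eq_false, false_and, not_false_eq_true]
  · rw [Sim, prec_iff_notMem (mul_inv_eq_one.not.2 hgh) hg]
    simp only [hgh, false_or]

theorem notMem_convexCentralizer_mul_inv_comm (hg : g ∉ convexCentralizer (g * h⁻¹)) :
    h ∉ convexCentralizer (h * g⁻¹) := by
  rw [show h * g⁻¹ = (g * h⁻¹)⁻¹ by group, convexCentralizer_inv]
  intro hh
  have := mul_mem (mem_convexCentralizer_self (g * h⁻¹)) hh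
  rw [inv_mul_cancel_right] at this
  exact hg this

theorem mem_or_mem_of_mem_convexCentralizer_mul (hG : GOG1 (· * ·) (1 : G) (· < ·) (· ≤ ·))
    (hab : a * b ≠ 1) (hx : x ∈ convexCentralizer (a * b)) :
    x ∈ convexCentralizer a ∨ x ∈ convexCentralizer b := by
  obtain ⟨c, hc, hxc⟩ := hx
  obtain ⟨m, hab_le, hm⟩ : ∃ m, |a * b|ₘ ≤ m * m ∧ (m = |a|ₘ ∨ m = |b|ₘ) :=
    ⟨_, mabs_mul_le_mul_self (le_max_left _ _) (le_max_right _ _), max_choice _ _⟩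
  have hab_lt : 1 < |a * b|ₘ := one_lt_mabs.2 hab
  obtain ⟨e, he, hce⟩ := hG (m * m) |a * b|ₘ (hab_lt.trans_le hab_le) hab_lt hab_le c
    (commute_mabs_right_iff.2 hc).eq
  have hem : Commute e m := Commute.of_mul_self_right he
  rcases hm with rfl | rfl <;> rw [commute_mabs_right_iff] at hem
  exacts [.inl ⟨e, hem, hxc.trans hce⟩, .inr ⟨e, hem, hxc.trans hce⟩]

theorem notMem_convexCentralizer_mul_inv_trans (hG : GOG1 (· * ·) (1 : G) (· < ·) (· ≤ ·))
    (hfh : f ≠ h) (hf : f ∉ convexCentralizer (f * g⁻¹)) (hg : g ∉ convexCentralizer (g * h⁻¹)) :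
    f ∉ convexCentralizer (f * h⁻¹) := by
  have hfb : f ∉ convexCentralizer (g * h⁻¹) := by
    intro hfb
    have hab := convexCentralizer_le_of_notMem hf hfb (mem_convexCentralizer_self _)
    have := mul_mem (inv_mem hab) hfb
    rw [mul_inv_rev, inv_inv, inv_mul_cancel_right] at this
    exact hg this
  have hd : f * g⁻¹ * (g * h⁻¹) = f * h⁻¹ := by group
  rw [← hd]
  intro hfd
  exact (mem_or_mem_of_mem_convexCentralizer_mul hG (hd ▸ mul_inv_eq_one.not.2 hfh) hfd).elim
    hf hfb

theorem sim_refl (hg : g ≠ 1) : Sim (· * ·) 1 (·⁻¹) (· ≤ ·) g g :=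
  (sim_iff hg).2 (.inl rfl)

theorem sim_symm (hg : g ≠ 1) (hh : h ≠ 1) :
    Sim (· * ·) 1 (·⁻¹) (· ≤ ·) g h → Sim (· * ·) 1 (·⁻¹) (· ≤ ·) h g := by
  rw [sim_iff hg, sim_iff hh]
  rintro (rfl | hgh)
  exacts [.inl rfl, .inr (notMem_convexCentralizer_mul_inv_comm hgh)]

theorem sim_trans (hG : GOG1 (· * ·) (1 : G) (· < ·) (· ≤ ·)) (hf : f ≠ 1) (hg : g ≠ 1) :
    Sim (· * ·) 1 (·⁻¹) (· ≤ ·) f g → Sim (· * ·) 1 (·⁻¹) (· ≤ ·) g h →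
      Sim (· * ·) 1 (·⁻¹) (· ≤ ·) f h := by
  rw [sim_iff hf, sim_iff hg, sim_iff hf]
  rintro (rfl | hfg) (rfl | hgh)
  exacts [.inl rfl, .inr hgh, .inr hfg,
    (eq_or_ne f h).imp id fun hfh => notMem_convexCentralizer_mul_inv_trans hG hfh hfg hgh]

end ConvexCentralizer

end GOG

theorem stmt_8 {G : Type*} [Group G] [LinearOrder G]
    [CovariantClass G G (· * ·) (· < ·)]
    [CovariantClass G G (Function.swap (· * ·)) (· < ·)]
    (h1 : GOG.GOG1 (· * ·) (1 : G) (· < ·) (· ≤ ·)) :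
    (∀ g : G, g ≠ 1 → GOG.Sim (· * ·) (1 : G) (·⁻¹) (· ≤ ·) g g) ∧
    (∀ g h : G, g ≠ 1 → h ≠ 1 → GOG.Sim (· * ·) (1 : G) (·⁻¹) (· ≤ ·) g h →
      GOG.Sim (· * ·) (1 : G) (·⁻¹) (· ≤ ·) h g) ∧
    (∀ f g h : G, f ≠ 1 → g ≠ 1 → h ≠ 1 →
      GOG.Sim (· * ·) (1 : G) (·⁻¹) (· ≤ ·) f g →
      GOG.Sim (· * ·) (1 : G) (·⁻¹) (· ≤ ·) g h →
      GOG.Sim (· * ·) (1 : G) (·⁻¹) (· ≤ ·) f h) := by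
  have := mulLeftMono_of_mulLeftStrictMono G
  have := mulRightMono_of_mulRightStrictMono G
  exact ⟨fun _ hg => GOG.sim_refl hg, fun _ _ hg hh => GOG.sim_symm hg hh,
    fun _ _ _ hf hg _ => GOG.sim_trans h1 hf hg⟩
end

section
/- Let G be an ordered group satisfying GOG1 and g, h ∈ G \ {1}. If g ∼ h⁻¹ or g ≺ h, then the commutator [g,h] = g⁻¹h⁻¹gh satisfies [g,h] ≺ h. -/
/-!
Write `H(y)` for the convex hull of the centraliser of `y`. In a bi-ordered group `H(y)` is a
subgroup, and for `y ≠ 1` the relation `f ≼ y` just says `f ∈ H(y)`. Axiom GOG1 makes `H`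
monotone: `H(x) ⊆ H(y)` whenever `1 ≠ |x| ≤ |y|`. The commutator `[x, y] = x⁻¹ (y⁻¹ x y)` is a
quotient of two elements of the same sign, so `|[x, y]| ≤ max (|x|, |y⁻¹ x y|)` and therefore
`H([x, y])` lies in `H(x)` or in its conjugate `y⁻¹ H(x) y`.

If `g ≺ h`, then `[g, h] ∈ H(h)` because `H(h)` is a subgroup containing `g` and `h`, while
`h ∈ H([g, h])` would force `h ∈ H(g)`. If `g ∼ h⁻¹`, put `u = g h`, so that `g ∉ H(u)`.
Then `|u²| ≤ |g|`, which places `g` in `H(h) = H(g⁻¹ u)`; and since `[g, h] = [u, g]⁻¹`,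
`h ∈ H([g, h])` would force `g ∈ H(u)`.
-/

namespace GOG

section Centralizer

variable {G : Type*} [Group G]

theorem cent_eq_centralizer (y : G) : Cent (· * ·) y = Subgroup.centralizer {y} := by
  ext x
  exact Subgroup.mem_centralizer_singleton_iff.symm

theorem self_mem_centralizer_singleton (y : G) : y ∈ Subgroup.centralizer {y} :=
  Subgroup.mem_centralizer_singleton_iff.mpr rfl

theorem centralizer_singleton_inv (y : G) :
    Subgroup.centralizer {y⁻¹} = Subgroup.centralizer {y} := by
  ext x
  simp only [Subgroup.mem_centralizer_singleton_iff]
  exact Commute.inv_right_iff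

variable [LinearOrder G]

theorem centralizer_singleton_mabs (y : G) :
    Subgroup.centralizer {|y|ₘ} = Subgroup.centralizer {y} := by
  rcases mabs_choice y with hy | hy <;> rw [hy]
  exact centralizer_singleton_inv y

end Centralizer

section CentralizerHull

variable {G : Type*} [Group G] [LinearOrder G] [MulLeftMono G] [MulRightMono G]

def centralizerHull (y : G) : Subgroup G where
  carrier := {x | ∃ a ∈ Subgroup.centralizer {y}, ∃ b ∈ Subgroup.centralizer {y}, a ≤ x ∧ x ≤ b}
  one_mem' := ⟨1, one_mem _, 1, one_mem _, le_rfl, le_rfl⟩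
  mul_mem' := by
    rintro x x' ⟨a, ha, b, hb, hax, hxb⟩ ⟨a', ha', b', hb', hax', hxb'⟩
    exact ⟨a * a', mul_mem ha ha', b * b', mul_mem hb hb', mul_le_mul' hax hax',
      mul_le_mul' hxb hxb'⟩
  inv_mem' := by
    rintro x ⟨a, ha, b, hb, hax, hxb⟩
    exact ⟨b⁻¹, inv_mem hb, a⁻¹, inv_mem ha, inv_le_inv_iff.mpr hxb, inv_le_inv_iff.mpr hax⟩

theorem self_mem_centralizerHull (y : G) : y ∈ centralizerHull y :=
  ⟨y, self_mem_centralizer_singleton y, y, self_mem_centralizer_singleton y, le_rfl, le_rfl⟩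

theorem centralizerHull_inv (y : G) : centralizerHull y⁻¹ = centralizerHull y := by
  simp only [centralizerHull, centralizer_singleton_inv]

theorem mem_centralizerHull_of_conj_mem {x y z : G} (hz : z ∈ centralizerHull (y⁻¹ * x * y)) :
    y * z * y⁻¹ ∈ centralizerHull x := by
  have conj_mem {a : G} (ha : a ∈ Subgroup.centralizer {y⁻¹ * x * y}) :
      y * a * y⁻¹ ∈ Subgroup.centralizer {x} := by
    rw [Subgroup.mem_centralizer_singleton_iff] at ha ⊢
    calc y * a * y⁻¹ * x = y * (a * (y⁻¹ * x * y)) * y⁻¹ := by group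
      _ = y * ((y⁻¹ * x * y) * a) * y⁻¹ := by rw [ha]
      _ = x * (y * a * y⁻¹) := by group
  obtain ⟨a, ha, b, hb, haz, hzb⟩ := hz
  exact ⟨_, conj_mem ha, _, conj_mem hb, mul_le_mul_left (mul_le_mul_right haz _) _,
    mul_le_mul_left (mul_le_mul_right hzb _) _⟩

theorem mabs_le_of_notMem_centralizerHull {x y w : G} (hx : x ∉ centralizerHull y)
    (hw : w ∈ Subgroup.centralizer {y}) : |w|ₘ ≤ |x|ₘ := by
  by_contra! hlt
  have habs : |w|ₘ ∈ Subgroup.centralizer {y} := by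
    rcases mabs_choice w with h | h <;> rw [h]
    · exact hw
    · exact inv_mem hw
  exact hx ⟨_, inv_mem habs, _, habs, (inv_le_inv_iff.mpr hlt.le).trans (inv_mabs_le x),
    (le_mabs_self x).trans hlt.le⟩

/-- The witnesses are `1` and `(u⁻¹ g)²`. -/
theorem mem_centralizerHull_inv_mul {g u : G} (hu : |u * u|ₘ ≤ |g|ₘ) :
    g ∈ centralizerHull (g⁻¹ * u) := by
  have hsq : (g⁻¹ * u)⁻¹ * (g⁻¹ * u)⁻¹ ∈ Subgroup.centralizer {g⁻¹ * u} :=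
    mul_mem (inv_mem (self_mem_centralizer_singleton _))
      (inv_mem (self_mem_centralizer_singleton _))
  rcases le_total 1 g with hg | hg
  · have huu : u * u ≤ g := (le_mabs_self _).trans (hu.trans (mabs_of_one_le hg).le)
    refine ⟨1, one_mem _, _, hsq, hg, ?_⟩
    calc g = u⁻¹ * (u * u) * u⁻¹ * g := by group
      _ ≤ u⁻¹ * g * u⁻¹ * g := by gcongr
      _ = (g⁻¹ * u)⁻¹ * (g⁻¹ * u)⁻¹ := by group
  · have huu : g ≤ u * u := by
      have := (inv_mabs_le (u * u)).trans' (inv_le_inv_iff.mpr hu)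
      rwa [mabs_of_le_one hg, inv_inv] at this
    refine ⟨_, hsq, 1, one_mem _, ?_, hg⟩
    calc (g⁻¹ * u)⁻¹ * (g⁻¹ * u)⁻¹ = u⁻¹ * g * u⁻¹ * g := by group
      _ ≤ u⁻¹ * (u * u) * u⁻¹ * g := by gcongr
      _ = g := by group

theorem mabs_inv_mul_conj_le_max (x y : G) :
    |x⁻¹ * (y⁻¹ * x * y)|ₘ ≤ max |x|ₘ |y⁻¹ * x * y|ₘ := by
  rw [mabs_le']
  rcases le_total 1 x with hx | hx
  · have hx' : 1 ≤ y⁻¹ * x * y := by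
      calc (1 : G) = y⁻¹ * 1 * y := by group
        _ ≤ y⁻¹ * x * y := by gcongr
    constructor
    · calc x⁻¹ * (y⁻¹ * x * y) ≤ y⁻¹ * x * y := mul_le_of_le_one_left' (inv_le_one'.mpr hx)
        _ ≤ _ := (le_mabs_self _).trans (le_max_right _ _)
    · calc (x⁻¹ * (y⁻¹ * x * y))⁻¹ = (y⁻¹ * x * y)⁻¹ * x := by group
        _ ≤ x := mul_le_of_le_one_left' (inv_le_one'.mpr hx')
        _ ≤ _ := (le_mabs_self x).trans (le_max_left _ _)
  · have hx' : y⁻¹ * x * y ≤ 1 := by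
      calc y⁻¹ * x * y ≤ y⁻¹ * 1 * y := by gcongr
        _ = 1 := by group
    constructor
    · calc x⁻¹ * (y⁻¹ * x * y) ≤ x⁻¹ := mul_le_of_le_one_right' hx'
        _ ≤ _ := (inv_le_mabs x).trans (le_max_left _ _)
    · calc (x⁻¹ * (y⁻¹ * x * y))⁻¹ = (y⁻¹ * x * y)⁻¹ * x := by group
        _ ≤ (y⁻¹ * x * y)⁻¹ := mul_le_of_le_one_right' hx
        _ ≤ _ := (inv_le_mabs _).trans (le_max_right _ _)

theorem centralizerHull_mono (h1 : GOG1 (· * ·) (1 : G) (· < ·) (· ≤ ·)) {x y : G} (hx : x ≠ 1)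
    (hxy : |x|ₘ ≤ |y|ₘ) : centralizerHull x ≤ centralizerHull y := by
  have hx' : 1 < |x|ₘ := one_lt_mabs.mpr hx
  have bound {w : G} (hw : w ∈ Subgroup.centralizer {x}) :
      ∃ w' ∈ Subgroup.centralizer {y}, w ≤ w' := by
    have := h1 _ _ (hx'.trans_le hxy) hx' hxy w
      (by rwa [cent_eq_centralizer, centralizer_singleton_mabs])
    rwa [cent_eq_centralizer, centralizer_singleton_mabs] at this
  rintro z ⟨a, ha, b, hb, haz, hzb⟩
  obtain ⟨a', ha', haa'⟩ := bound (inv_mem ha)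
  obtain ⟨b', hb', hbb'⟩ := bound hb
  exact ⟨a'⁻¹, inv_mem ha', b', hb', (inv_le'.mp haa').trans haz, hzb.trans hbb'⟩

theorem preceq_iff_mem_centralizerHull {x y : G} (hy : y ≠ 1) :
    Preceq (· * ·) 1 (· ≤ ·) x y ↔ x ∈ centralizerHull y := by
  rw [Preceq, cent_eq_centralizer]
  constructor
  · rintro (rfl | ⟨-, hx⟩)
    exacts [one_mem _, hx]
  · exact fun hx => Or.inr ⟨hy, hx⟩

theorem prec_iff_mem_centralizerHull {x y : G} (hy : y ≠ 1) :
    Prec (· * ·) 1 (· ≤ ·) x y ↔ x ∈ centralizerHull y ∧ (x ≠ 1 → y ∉ centralizerHull x) := by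
  rw [Prec, preceq_iff_mem_centralizerHull hy, Preceq, cent_eq_centralizer]
  constructor
  · rintro ⟨hx, hyx⟩
    exact ⟨hx, fun hx1 hyx' => hyx (Or.inr ⟨hx1, hyx'⟩)⟩
  · rintro ⟨hx, hyx⟩
    refine ⟨hx, ?_⟩
    rintro (rfl | ⟨hx1, hyx'⟩)
    exacts [hy rfl, hyx hx1 hyx']

theorem commutator_mem_centralizerHull {g h : G} (hg : g ∈ centralizerHull h) :
    g⁻¹ * h⁻¹ * g * h ∈ centralizerHull h :=
  have hh := self_mem_centralizerHull h
  mul_mem (mul_mem (mul_mem (inv_mem hg) (inv_mem hh)) hg) hh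

theorem mem_or_conj_mem_of_mem_centralizerHull_commutator
    (h1 : GOG1 (· * ·) (1 : G) (· < ·) (· ≤ ·)) {x y z : G} (hc : x⁻¹ * y⁻¹ * x * y ≠ 1)
    (hz : z ∈ centralizerHull (x⁻¹ * y⁻¹ * x * y)) :
    z ∈ centralizerHull x ∨ y * z * y⁻¹ ∈ centralizerHull x := by
  have hle := mabs_inv_mul_conj_le_max x y
  rw [show x⁻¹ * (y⁻¹ * x * y) = x⁻¹ * y⁻¹ * x * y by group] at hle
  rcases le_max_iff.mp hle with h | h
  · exact Or.inl (centralizerHull_mono h1 hc h hz)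
  · exact Or.inr (mem_centralizerHull_of_conj_mem (centralizerHull_mono h1 hc h hz))

theorem prec_commutator_of_prec (h1 : GOG1 (· * ·) (1 : G) (· < ·) (· ≤ ·)) {g h : G}
    (hg : g ≠ 1) (hh : h ≠ 1) (hgh : Prec (· * ·) 1 (· ≤ ·) g h) :
    Prec (· * ·) 1 (· ≤ ·) (g⁻¹ * h⁻¹ * g * h) h := by
  rw [prec_iff_mem_centralizerHull hh] at hgh ⊢
  obtain ⟨hgh, hhg⟩ := hgh
  refine ⟨commutator_mem_centralizerHull hgh, fun hc hhc => hhg hg ?_⟩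
  rcases mem_or_conj_mem_of_mem_centralizerHull_commutator h1 hc hhc with h' | h'
  · exact h'
  · simpa using h'

theorem prec_commutator_of_sim_inv (h1 : GOG1 (· * ·) (1 : G) (· < ·) (· ≤ ·)) {g h : G}
    (hg : g ≠ 1) (hh : h ≠ 1) (hgh : Sim (· * ·) 1 (·⁻¹) (· ≤ ·) g h⁻¹) :
    Prec (· * ·) 1 (· ≤ ·) (g⁻¹ * h⁻¹ * g * h) h := by
  rw [prec_iff_mem_centralizerHull hh]
  by_cases hu : g * h = 1
  · obtain rfl := eq_inv_of_mul_eq_one_right hu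
    simp
  rw [Sim, inv_inv, prec_iff_mem_centralizerHull hg] at hgh
  have hgu : g ∉ centralizerHull (g * h) := hgh.2 hu
  have hgh' : g ∈ centralizerHull h := by
    simpa using mem_centralizerHull_inv_mul (mabs_le_of_notMem_centralizerHull hgu
      (mul_mem (self_mem_centralizer_singleton _) (self_mem_centralizer_singleton _)))
  refine ⟨commutator_mem_centralizerHull hgh', fun hc hhc => hgu ?_⟩
  have hcomm : g⁻¹ * h⁻¹ * g * h = ((g * h)⁻¹ * g⁻¹ * (g * h) * g)⁻¹ := by group
  rw [hcomm, centralizerHull_inv] at hhc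
  rw [hcomm, inv_ne_one] at hc
  have hu := self_mem_centralizerHull (g * h)
  rcases mem_or_conj_mem_of_mem_centralizerHull_commutator h1 hc hhc with h' | h'
  · convert mul_mem hu (inv_mem h') using 1
    group
  · convert mul_mem (inv_mem h') hu using 1
    group

end CentralizerHull

end GOG

theorem stmt_9 {G : Type*} [Group G] [LinearOrder G]
    [CovariantClass G G (· * ·) (· < ·)]
    [CovariantClass G G (Function.swap (· * ·)) (· < ·)]
    (h1 : GOG.GOG1 (· * ·) (1 : G) (· < ·) (· ≤ ·))
    (g h : G) (hg : g ≠ 1) (hh : h ≠ 1)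
    (hyp : GOG.Sim (· * ·) (1 : G) (·⁻¹) (· ≤ ·) g h⁻¹ ∨
      GOG.Prec (· * ·) (1 : G) (· ≤ ·) g h) :
    GOG.Prec (· * ·) (1 : G) (· ≤ ·) (g⁻¹ * h⁻¹ * g * h) h := by
  have : MulLeftMono G := covariantClass_le_of_lt _ _ _
  have : MulRightMono G := covariantClass_le_of_lt _ _ _
  rcases hyp with hsim | hprec
  · exact GOG.prec_commutator_of_sim_inv h1 hg hh hsim
  · exact GOG.prec_commutator_of_prec h1 hg hh hprec
end

section
/- Let K be an ordered field and V an ordered vector space over K. The group of strictly increasing affine maps x ↦ λ·x + a (λ ∈ K^{>0}, a ∈ V), under composition and ordered by eventual comparison (equivalently, lexicographically on (λ, a)), is a growth order group. -/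
/-! Off the translations, the centraliser of an affine map contains maps of every slope, so all
non-translations form a single growth rank; the centraliser of a nontrivial translation is the
translation subgroup, so the nontrivial translations form the rank below it. GOG1 and GOG2 thus
reduce to comparisons of slopes, and `x ↦ 2 • x` and `x ↦ x + c` with `c > 0` are scaling
elements of the two ranks. -/

theorem GOG.prec_one_of_ne {α : Type*} {mul : α → α → α} {one : α}
    {le : α → α → Prop} {f : α} (hf : f ≠ one) : GOG.Prec mul one le one f :=
  ⟨Or.inl rfl, by rintro (h | ⟨h, -⟩) <;> contradiction⟩

theorem GOG.eq_one_of_preceq_one {α : Type*} {mul : α → α → α} {one : α}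
    {le : α → α → Prop} {f : α} (hf : GOG.Preceq mul one le f one) : f = one := by
  rcases hf with hf | ⟨h, -⟩
  exacts [hf, absurd rfl h]

theorem lt_smul_self_of_one_lt {K V : Type*} [Ring K] [PartialOrder K] [IsOrderedRing K]
    [AddCommGroup V] [PartialOrder V] [AddLeftStrictMono V] [Module K V] [PosSMulStrictMono K V]
    {c : K} (hc : 1 < c) {v : V} (hv : 0 < v) : v < c • v :=
  calc v = v + 0 := (add_zero v).symm
    _ < v + (c - 1) • v := add_lt_add_right (smul_pos (sub_pos.2 hc) hv) v
    _ = c • v := by rw [sub_smul, one_smul, add_sub_cancel]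

/-- The pair `(λ, a)` stands for the affine map `x ↦ λ • x + a`. -/
abbrev Aff (K V : Type*) [Zero K] [LT K] : Type _ := {c : K // 0 < c} × V

namespace Aff

theorem ext_iff {K V : Type*} [Zero K] [LT K] {p q : Aff K V} :
    p = q ↔ p.1.1 = q.1.1 ∧ p.2 = q.2 := by
  rw [Prod.ext_iff, Subtype.ext_iff]

section Order

variable {K V : Type*} [Zero K] [Preorder K]

/-- Comparing `(λ, a)` lexicographically is comparing the affine maps by their eventual values. -/
def lt [LT V] (p q : Aff K V) : Prop := p.1.1 < q.1.1 ∨ (p.1.1 = q.1.1 ∧ p.2 < q.2)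

def le [LE V] (p q : Aff K V) : Prop := p.1.1 < q.1.1 ∨ (p.1.1 = q.1.1 ∧ p.2 ≤ q.2)

theorem fst_le_of_le [LE V] {p q : Aff K V} (h : le p q) : p.1.1 ≤ q.1.1 := by
  rcases h with h | ⟨h, -⟩
  exacts [h.le, h.le]

theorem le_refl [Preorder V] (p : Aff K V) : le p p := Or.inr ⟨rfl, le_rfl⟩

theorem le_of_lt [Preorder V] {p q : Aff K V} (h : lt p q) : le p q := by
  rcases h with h | ⟨h, h₂⟩
  exacts [Or.inl h, Or.inr ⟨h, h₂.le⟩]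

theorem ne_of_lt [Preorder V] {p q : Aff K V} (h : lt p q) : p ≠ q := by
  rintro rfl
  rcases h with h | ⟨-, h⟩ <;> exact lt_irrefl _ h

theorem lt_iff_toLex_lt [LT V] {p q : Aff K V} :
    lt p q ↔ toLex (p.1.1, p.2) < toLex (q.1.1, q.2) :=
  (Prod.Lex.toLex_lt_toLex (x := (p.1.1, p.2)) (y := (q.1.1, q.2))).symm

end Order

section Group

variable {K V : Type*} [Field K] [LinearOrder K] [IsStrictOrderedRing K] [AddCommGroup V]
  [Module K V]

/-- Composition of affine maps: `mul p q = p ∘ q`. -/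
def mul (p q : Aff K V) : Aff K V := (⟨p.1.1 * q.1.1, mul_pos p.1.2 q.1.2⟩, p.1.1 • q.2 + p.2)

def one : Aff K V := (⟨1, one_pos⟩, 0)

def inv (p : Aff K V) : Aff K V := (⟨(p.1.1)⁻¹, inv_pos.2 p.1.2⟩, -((p.1.1)⁻¹ • p.2))

theorem inv_mul (p : Aff K V) : mul (inv p) p = one :=
  ext_iff.2 ⟨inv_mul_cancel₀ p.1.2.ne', add_neg_cancel _⟩

theorem mul_inv (p : Aff K V) : mul p (inv p) = one := by
  refine ext_iff.2 ⟨mul_inv_cancel₀ p.1.2.ne', ?_⟩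
  simp only [mul, inv, one, smul_neg, smul_inv_smul₀ p.1.2.ne', neg_add_cancel]

theorem mul_assoc (p q r : Aff K V) : mul (mul p q) r = mul p (mul q r) := by
  refine ext_iff.2 ⟨_root_.mul_assoc _ _ _, ?_⟩
  simp only [mul, smul_add, mul_smul, add_assoc]

theorem mem_cent_iff {g h : Aff K V} :
    h ∈ GOG.Cent mul g ↔ (h.1.1 - 1) • g.2 = (g.1.1 - 1) • h.2 := by
  simp only [GOG.Cent, mul, Set.mem_ofPred_eq, ext_iff, mul_comm h.1.1, true_and, sub_smul,
    one_smul, sub_eq_sub_iff_add_eq_add]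

/-- The witnesses are the homotheties centred at the fixed point of `g`. -/
theorem exists_mem_cent_fst_eq {g : Aff K V} (hg : g.1.1 ≠ 1) (μ : {c : K // 0 < c}) :
    ∃ h ∈ GOG.Cent mul g, h.1 = μ := by
  refine ⟨(μ, ((μ.1 - 1) / (g.1.1 - 1)) • g.2), mem_cent_iff.2 ?_, rfl⟩
  rw [smul_smul, mul_div_cancel₀ _ (sub_ne_zero.2 hg)]

theorem mem_cent_iff_of_fst_eq_one {g h : Aff K V} (hg₁ : g.1.1 = 1) (hg₂ : g.2 ≠ 0) :
    h ∈ GOG.Cent mul g ↔ h.1.1 = 1 := by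
  rw [mem_cent_iff, hg₁, sub_self, zero_smul, smul_eq_zero, sub_eq_zero, or_iff_left hg₂]

theorem mem_cent_iff_of_snd_eq_zero {g h : Aff K V} (hg₁ : g.1.1 ≠ 1) (hg₂ : g.2 = 0) :
    h ∈ GOG.Cent mul g ↔ h.2 = 0 := by
  rw [mem_cent_iff, hg₂, smul_zero, eq_comm, smul_eq_zero, or_iff_right (sub_ne_zero.2 hg₁)]

omit [Module K V] in
theorem snd_ne_zero_of_fst_eq_one {g : Aff K V} (hg : g ≠ one) (hg₁ : g.1.1 = 1) : g.2 ≠ 0 :=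
  fun hg₂ => hg (ext_iff.2 ⟨hg₁, hg₂⟩)

end Group

section Rank

variable {K V : Type*} [Field K] [LinearOrder K] [IsStrictOrderedRing K] [AddCommGroup V]
  [Module K V] [Preorder V]

theorem preceq_of_fst_ne_one {g : Aff K V} (hg : g.1.1 ≠ 1) (f : Aff K V) :
    GOG.Preceq mul one le f g := by
  obtain ⟨a, ha, ha₁⟩ := exists_mem_cent_fst_eq hg ⟨f.1.1 / 2, half_pos f.1.2⟩
  obtain ⟨b, hb, hb₁⟩ := exists_mem_cent_fst_eq hg ⟨f.1.1 + 1, add_pos f.1.2 one_pos⟩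
  refine Or.inr ⟨fun h => hg (congrArg (·.1.1) h), a, ha, b, hb, Or.inl ?_, Or.inl ?_⟩
  · rw [ha₁]; exact half_lt_self f.1.2
  · rw [hb₁]; exact lt_add_one _

theorem not_preceq_of_fst_eq_one {f g : Aff K V} (hf : f.1.1 ≠ 1) (hg₁ : g.1.1 = 1) :
    ¬ GOG.Preceq mul one le f g := by
  rintro (rfl | ⟨hg, a, ha, b, hb, haf, hfb⟩)
  · exact hf rfl
  have hg₂ := snd_ne_zero_of_fst_eq_one hg hg₁
  have ha₁ := (mem_cent_iff_of_fst_eq_one hg₁ hg₂).1 ha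
  have hb₁ := (mem_cent_iff_of_fst_eq_one hg₁ hg₂).1 hb
  exact hf (le_antisymm (hb₁ ▸ fst_le_of_le hfb) (ha₁ ▸ fst_le_of_le haf))

theorem preceq_of_fst_eq_one {f g : Aff K V} (hf : f.1.1 = 1) (hg₁ : g.1.1 = 1)
    (hg₂ : g.2 ≠ 0) :
    GOG.Preceq mul one le f g := by
  have hfg : f ∈ GOG.Cent mul g := (mem_cent_iff_of_fst_eq_one hg₁ hg₂).2 hf
  exact Or.inr ⟨fun h => hg₂ (congrArg Prod.snd h), f, hfg, f, hfg, le_refl f, le_refl f⟩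

theorem gog1 : GOG.GOG1 (mul : Aff K V → Aff K V → Aff K V) one lt le := by
  intro f g hf hg hgf g₀ hg₀
  by_cases hf₁ : f.1.1 = 1
  · have hg₁ : g.1.1 = 1 := le_antisymm (hf₁ ▸ fst_le_of_le hgf) (fst_le_of_le (le_of_lt hg))
    have hg₀₁ := (mem_cent_iff_of_fst_eq_one hg₁
      (snd_ne_zero_of_fst_eq_one (ne_of_lt hg).symm hg₁)).1 hg₀
    exact ⟨g₀, (mem_cent_iff_of_fst_eq_one hf₁
      (snd_ne_zero_of_fst_eq_one (ne_of_lt hf).symm hf₁)).2 hg₀₁, le_refl g₀⟩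
  · obtain ⟨f₀, hf₀, hf₀₁⟩ :=
      exists_mem_cent_fst_eq hf₁ ⟨g₀.1.1 + 1, add_pos g₀.1.2 one_pos⟩
    exact ⟨f₀, hf₀, Or.inl (by rw [hf₀₁]; exact lt_add_one _)⟩

theorem scaling_of_fst_eq_one {s : Aff K V} (hs₁ : s.1.1 = 1) (hs₂ : 0 < s.2) :
    GOG.Scaling mul one inv lt le s := by
  have hcent {h : Aff K V} : h ∈ GOG.Cent mul s ↔ h.1.1 = 1 :=
    mem_cent_iff_of_fst_eq_one hs₁ hs₂.ne'
  have hs : lt one s := Or.inr ⟨hs₁.symm, hs₂⟩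
  refine ⟨hs, fun a ha b hb => mem_cent_iff.2 ?_, fun f hf => ?_⟩
  · rw [hcent.1 ha, hcent.1 hb, sub_self, zero_smul, zero_smul]
  · have hf₁ : f.1.1 = 1 := by
      by_contra h
      exact not_preceq_of_fst_eq_one h hs₁ hf.1
    have hf_ne : f ≠ one := by
      rintro rfl
      exact (ne_of_lt hs).symm (GOG.eq_one_of_preceq_one hf.2)
    refine ⟨f, hcent.2 hf₁, hf_ne, ?_⟩
    show GOG.Prec mul one le (mul f (inv f)) f
    rw [mul_inv]
    exact GOG.prec_one_of_ne hf_ne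

theorem scaling_of_snd_eq_zero {s : Aff K V} (hs₁ : 1 < s.1.1) (hs₂ : s.2 = 0) :
    GOG.Scaling mul one inv lt le s := by
  have hcent {h : Aff K V} : h ∈ GOG.Cent mul s ↔ h.2 = 0 :=
    mem_cent_iff_of_snd_eq_zero hs₁.ne' hs₂
  refine ⟨Or.inl hs₁, fun a ha b hb => mem_cent_iff.2 ?_, fun f hf => ?_⟩
  · rw [hcent.1 ha, hcent.1 hb, smul_zero, smul_zero]
  · have hf₁ : f.1.1 ≠ 1 := fun h => not_preceq_of_fst_eq_one hs₁.ne' h hf.2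
    refine ⟨(f.1, 0), hcent.2 rfl, fun h => hf₁ (congrArg (·.1.1) h), ?_⟩
    -- `(f.1, 0) * f⁻¹` is a translation, so it lies in a strictly lower rank than `(f.1, 0)`.
    have hquot : (mul (f.1, 0) (inv f)).1.1 = 1 := mul_inv_cancel₀ f.1.2.ne'
    exact ⟨preceq_of_fst_ne_one (g := (f.1, 0)) hf₁ _,
      not_preceq_of_fst_eq_one (f := (f.1, 0)) hf₁ hquot⟩

end Rank

section GrowthOrderGroup

variable {K V : Type*} [Field K] [LinearOrder K] [IsStrictOrderedRing K] [AddCommGroup V]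
  [LinearOrder V] [AddLeftStrictMono V] [Module K V]

theorem mul_lt_mul_right {g h : Aff K V} (hgh : lt g h) (f : Aff K V) :
    lt (mul g f) (mul h f) := by
  rcases hgh with hgh | ⟨hgh, hgh₂⟩
  · exact Or.inl (mul_lt_mul_of_pos_right hgh f.1.2)
  · refine Or.inr ⟨congrArg (· * f.1.1) hgh, ?_⟩
    show g.1.1 • f.2 + g.2 < h.1.1 • f.2 + h.2
    rw [hgh]
    exact add_lt_add_right hgh₂ _

theorem gog3 : GOG.GOG3 (mul : Aff K V → Aff K V → Aff K V) one inv lt le := by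
  intro g hg
  by_cases hg₁ : g.1.1 = 1
  · have hg₂ := snd_ne_zero_of_fst_eq_one hg hg₁
    obtain ⟨c, hc⟩ : ∃ c : V, 0 < c :=
      hg₂.lt_or_gt.elim (fun h => ⟨-g.2, neg_pos.2 h⟩) (fun h => ⟨g.2, h⟩)
    exact ⟨(⟨1, one_pos⟩, c), scaling_of_fst_eq_one rfl hc,
      preceq_of_fst_eq_one rfl hg₁ hg₂, preceq_of_fst_eq_one hg₁ rfl hc.ne'⟩
  · exact ⟨(⟨2, two_pos⟩, 0), scaling_of_snd_eq_zero one_lt_two rfl,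
      preceq_of_fst_ne_one hg₁ _, preceq_of_fst_ne_one one_lt_two.ne' _⟩

variable [PosSMulStrictMono K V]

theorem mul_lt_mul_left {g h : Aff K V} (hgh : lt g h) (f : Aff K V) :
    lt (mul f g) (mul f h) := by
  rcases hgh with hgh | ⟨hgh, hgh₂⟩
  · exact Or.inl (mul_lt_mul_of_pos_left hgh f.1.2)
  · exact Or.inr ⟨congrArg (f.1.1 * ·) hgh,
      add_lt_add_left (smul_lt_smul_of_pos_left hgh₂ f.1.2) f.2⟩

theorem isOrderedGroup : GOG.IsOrderedGroup (mul : Aff K V → Aff K V → Aff K V) one inv lt := by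
  refine ⟨mul_assoc, fun p => ext_iff.2 ⟨one_mul _, ?_⟩,
    fun p => ext_iff.2 ⟨mul_one _, ?_⟩,
    inv_mul, fun p h => lt_irrefl _ (lt_iff_toLex_lt.1 h),
    fun p q r hpq hqr => lt_iff_toLex_lt.2 ((lt_iff_toLex_lt.1 hpq).trans (lt_iff_toLex_lt.1 hqr)),
    fun p q => ?_, fun f g h hgh => ⟨mul_lt_mul_left hgh f, mul_lt_mul_right hgh f⟩⟩
  · simp only [mul, one, one_smul, add_zero]
  · simp only [mul, one, smul_zero, zero_add]
  · rcases lt_trichotomy (toLex (p.1.1, p.2)) (toLex (q.1.1, q.2)) with h | h | h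
    · exact Or.inl (lt_iff_toLex_lt.2 h)
    · exact Or.inr (Or.inl (ext_iff.2 (Prod.ext_iff.1 (toLex.injective h))))
    · exact Or.inr (Or.inr (lt_iff_toLex_lt.2 h))

theorem gog2 : GOG.GOG2 (mul : Aff K V → Aff K V → Aff K V) one lt := by
  intro f g _ hg hcent
  have hg₁ : g.1.1 = 1 := by
    by_contra hg₁
    obtain ⟨h, hh, hh₁⟩ := exists_mem_cent_fst_eq hg₁ ⟨f.1.1 + 1, add_pos f.1.2 one_pos⟩
    have := fst_le_of_le (le_of_lt (hcent h hh))
    rw [hh₁] at this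
    exact (lt_add_one f.1.1).not_ge this
  have hg₂ : 0 < g.2 := by
    rcases hg with h | ⟨-, h⟩
    exacts [absurd hg₁ h.ne', h]
  have hf₁ : 1 < f.1.1 := by
    have hf_cent : ((⟨1, one_pos⟩, f.2) : Aff K V) ∈ GOG.Cent mul g :=
      (mem_cent_iff_of_fst_eq_one hg₁ hg₂.ne').2 rfl
    rcases hcent _ hf_cent with h | ⟨-, h⟩
    exacts [h, absurd h (lt_irrefl _)]
  refine Or.inr ⟨_root_.mul_comm _ _, ?_⟩
  show g.1.1 • f.2 + g.2 < f.1.1 • g.2 + f.2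
  rw [hg₁, one_smul, add_comm]
  exact add_lt_add_left (lt_smul_self_of_one_lt hf₁ hg₂) f.2

theorem isGrowthOrderGroup :
    GOG.IsGrowthOrderGroup (mul : Aff K V → Aff K V → Aff K V) one inv lt le :=
  ⟨isOrderedGroup, gog1, gog2, gog3⟩

end GrowthOrderGroup

end Aff

theorem stmt_16_general {K V : Type*} [Field K] [LinearOrder K] [IsStrictOrderedRing K]
    [AddCommGroup V] [LinearOrder V]
    [CovariantClass V V (· + ·) (· < ·)]
    [Module K V] [PosSMulStrictMono K V] :
    GOG.IsGrowthOrderGroup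
      (fun p q : {c : K // 0 < c} × V =>
        ((⟨p.1.1 * q.1.1, mul_pos p.1.2 q.1.2⟩ : {c : K // 0 < c}),
          p.1.1 • q.2 + p.2))
      (((⟨1, one_pos⟩ : {c : K // 0 < c}), (0 : V)) : {c : K // 0 < c} × V)
      (fun p : {c : K // 0 < c} × V =>
        ((⟨(p.1.1)⁻¹, inv_pos.2 p.1.2⟩ : {c : K // 0 < c}), -((p.1.1)⁻¹ • p.2)))
      (fun p q : {c : K // 0 < c} × V => p.1.1 < q.1.1 ∨ (p.1.1 = q.1.1 ∧ p.2 < q.2))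
      (fun p q : {c : K // 0 < c} × V => p.1.1 < q.1.1 ∨ (p.1.1 = q.1.1 ∧ p.2 ≤ q.2)) :=
  Aff.isGrowthOrderGroup

theorem stmt_16 {K V : Type*} [Field K] [LinearOrder K] [IsStrictOrderedRing K]
    [AddCommGroup V] [LinearOrder V]
    [CovariantClass V V (· + ·) (· < ·)]
    [Module K V] [PosSMulStrictMono K V] [SMulPosStrictMono K V] :
    GOG.IsGrowthOrderGroup
      (fun p q : {c : K // 0 < c} × V =>
        ((⟨p.1.1 * q.1.1, mul_pos p.1.2 q.1.2⟩ : {c : K // 0 < c}),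
          p.1.1 • q.2 + p.2))
      (((⟨1, one_pos⟩ : {c : K // 0 < c}), (0 : V)) : {c : K // 0 < c} × V)
      (fun p : {c : K // 0 < c} × V =>
        ((⟨(p.1.1)⁻¹, inv_pos.2 p.1.2⟩ : {c : K // 0 < c}), -((p.1.1)⁻¹ • p.2)))
      (fun p q : {c : K // 0 < c} × V => p.1.1 < q.1.1 ∨ (p.1.1 = q.1.1 ∧ p.2 < q.2))
      (fun p q : {c : K // 0 < c} × V => p.1.1 < q.1.1 ∨ (p.1.1 = q.1.1 ∧ p.2 ≤ q.2)) :=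
  stmt_16_general
end

section
/- Let G be a growth order group and N ⊆ G a ≼-initial subgroup (nonempty, and f ∈ N, g ≼ f imply g ∈ N). Then N is a convex subgroup of G and is itself a growth order group. -/
/-! If `g ∈ N` and `g ≠ 1`, every element of the convex hull of `C(g)` lies in `N`; in particular
`C(g) ⊆ N`. Hence centralisers, `≼`, `≺` and `≍` computed inside `N` agree with those computed in
`G`, and GOG1–GOG3 restrict to `N`. Convexity: for `a ≤ c ≤ b` in `G` with `a, b ∈ N`, the element
`m = max b a⁻¹ ∈ N` satisfies `m⁻¹ ≤ c ≤ m`, and `m⁻¹, m ∈ C(m)`, so `c ≼ m`. -/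

namespace GOG

section Initial

variable {G : Type*} [Group G]

def IsPreceqInitial [LE G] (N : Subgroup G) : Prop :=
  ∀ f ∈ N, ∀ g : G, Preceq (· * ·) (1 : G) (· ≤ ·) g f → g ∈ N

theorem mem_cent_subgroup_iff {N : Subgroup G} {g h : N} :
    h ∈ Cent ((· * ·) : N → N → N) g ↔ (h : G) ∈ Cent (· * ·) (g : G) :=
  Subtype.ext_iff

theorem preceq_of_inv_le_of_le [PartialOrder G] {c m : G} (h₁ : m⁻¹ ≤ c) (h₂ : c ≤ m) :
    Preceq (· * ·) (1 : G) (· ≤ ·) c m := by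
  by_cases hm : m = 1
  · subst hm
    exact Or.inl (le_antisymm h₂ (by simpa using h₁))
  · exact Or.inr ⟨hm, m⁻¹, by simp [Cent], m, rfl, h₁, h₂⟩

namespace IsPreceqInitial

variable {N : Subgroup G}

theorem cent_subset [Preorder G] (hN : IsPreceqInitial N) {g : G} (hg : g ∈ N) (hg1 : g ≠ 1) :
    Cent (· * ·) g ⊆ N :=
  fun a ha => hN g hg a (Or.inr ⟨hg1, a, ha, a, ha, le_rfl, le_rfl⟩)

theorem ordConnected [LinearOrder G] [CovariantClass G G (· * ·) (· < ·)]
    [CovariantClass G G (Function.swap (· * ·)) (· < ·)] (hN : IsPreceqInitial N) :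
    (N : Set G).OrdConnected := by
  have := covariantClass_le_of_lt G G (· * ·)
  have := covariantClass_le_of_lt G G (Function.swap (· * ·))
  refine ⟨fun a ha b hb c ⟨hac, hcb⟩ => ?_⟩
  have hmN : b ⊔ a⁻¹ ∈ N := sup_ind b a⁻¹ hb (N.inv_mem ha)
  have hma : (b ⊔ a⁻¹)⁻¹ ≤ a := inv_le'.mp le_sup_right
  exact hN _ hmN c (preceq_of_inv_le_of_le (hma.trans hac) (hcb.trans le_sup_left))

variable [Preorder G] (hN : IsPreceqInitial N)
include hN

theorem preceq_subgroup_iff {f g : N} :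
    Preceq ((· * ·) : N → N → N) 1 (· ≤ ·) f g ↔
      Preceq (· * ·) (1 : G) (· ≤ ·) (f : G) (g : G) := by
  constructor
  · rintro (rfl | ⟨hg, a, ha, b, hb, haf, hfb⟩)
    · exact Or.inl rfl
    · exact Or.inr ⟨by simpa using hg, a, mem_cent_subgroup_iff.mp ha, b,
        mem_cent_subgroup_iff.mp hb, haf, hfb⟩
  · rintro (hf | ⟨hg, a, ha, b, hb, haf, hfb⟩)
    · exact Or.inl (Subtype.ext hf)
    · have hC := hN.cent_subset g.2 hg
      exact Or.inr ⟨by simpa using hg, ⟨a, hC ha⟩, mem_cent_subgroup_iff.mpr ha,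
        ⟨b, hC hb⟩, mem_cent_subgroup_iff.mpr hb, haf, hfb⟩

theorem prec_subgroup_iff {f g : N} :
    Prec ((· * ·) : N → N → N) 1 (· ≤ ·) f g ↔
      Prec (· * ·) (1 : G) (· ≤ ·) (f : G) (g : G) := by
  simp only [Prec, hN.preceq_subgroup_iff]

theorem asymp_subgroup_iff {f g : N} :
    Asymp ((· * ·) : N → N → N) 1 (· ≤ ·) f g ↔
      Asymp (· * ·) (1 : G) (· ≤ ·) (f : G) (g : G) := by
  simp only [Asymp, hN.preceq_subgroup_iff]

theorem gog1 (h1 : GOG1 (· * ·) (1 : G) (· < ·) (· ≤ ·)) :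
    GOG1 ((· * ·) : N → N → N) 1 (· < ·) (· ≤ ·) := by
  intro f g hf hg hgf g₀ hg₀
  obtain ⟨f₀, hf₀, hg₀f₀⟩ := h1 f g hf hg hgf g₀ (mem_cent_subgroup_iff.mp hg₀)
  exact ⟨⟨f₀, hN.cent_subset f.2 (show (1 : G) < f from hf).ne' hf₀⟩,
    mem_cent_subgroup_iff.mpr hf₀, hg₀f₀⟩

theorem gog2 (h2 : GOG2 (· * ·) (1 : G) (· < ·)) : GOG2 ((· * ·) : N → N → N) 1 (· < ·) := by
  intro f g hf hg hcent
  exact h2 f g hf hg fun h hh =>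
    hcent ⟨h, hN.cent_subset g.2 (show (1 : G) < g from hg).ne' hh⟩
      (mem_cent_subgroup_iff.mpr hh)

theorem gog3 (h3 : GOG3 (· * ·) (1 : G) (·⁻¹) (· < ·) (· ≤ ·)) :
    GOG3 ((· * ·) : N → N → N) 1 (·⁻¹) (· < ·) (· ≤ ·) := by
  intro g hg
  obtain ⟨s, ⟨hs1, hscomm, hsscal⟩, hsg, hgs⟩ := h3 g (by simpa using hg)
  let S : N := ⟨s, hN g g.2 s hsg⟩
  have hC : Cent (· * ·) s ⊆ N := hN.cent_subset S.2 hs1.ne'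
  refine ⟨S, ⟨hs1, fun a ha b hb => ?_, fun f hf => ?_⟩,
    hN.preceq_subgroup_iff.mpr hsg, hN.preceq_subgroup_iff.mpr hgs⟩
  · exact Subtype.ext (hscomm a (mem_cent_subgroup_iff.mp ha) b (mem_cent_subgroup_iff.mp hb))
  · obtain ⟨g₀, hg₀, hg₀1, hg₀f⟩ := hsscal f (hN.asymp_subgroup_iff.mp hf)
    let g₀' : N := ⟨g₀, hC hg₀⟩
    exact ⟨g₀', mem_cent_subgroup_iff.mpr hg₀, by simpa [g₀'] using hg₀1,
      (hN.prec_subgroup_iff (f := g₀' * f⁻¹) (g := g₀')).mpr hg₀f⟩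

end IsPreceqInitial

end Initial

section Ordered

variable {H : Type*} [Group H] [LinearOrder H]

instance [CovariantClass H H (· * ·) (· < ·)] (N : Subgroup H) :
    CovariantClass N N (· * ·) (· < ·) :=
  ⟨fun f _ _ h => mul_lt_mul_right (show (_ : H) < _ from h) (f : H)⟩

instance [CovariantClass H H (Function.swap (· * ·)) (· < ·)] (N : Subgroup H) :
    CovariantClass N N (Function.swap (· * ·)) (· < ·) :=
  ⟨fun f _ _ h => mul_lt_mul_left (show (_ : H) < _ from h) (f : H)⟩

theorem isOrderedGroup [CovariantClass H H (· * ·) (· < ·)]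
    [CovariantClass H H (Function.swap (· * ·)) (· < ·)] :
    IsOrderedGroup ((· * ·) : H → H → H) 1 (·⁻¹) (· < ·) :=
  ⟨mul_assoc, one_mul, mul_one, inv_mul_cancel, lt_irrefl, fun _ _ _ => lt_trans,
    lt_trichotomy, fun f _ _ h => ⟨mul_lt_mul_right h f, mul_lt_mul_left h f⟩⟩

end Ordered

end GOG

theorem stmt_17 {G : Type*} [Group G] [LinearOrder G]
    [CovariantClass G G (· * ·) (· < ·)]
    [CovariantClass G G (Function.swap (· * ·)) (· < ·)]
    (h1 : GOG.GOG1 (· * ·) (1 : G) (· < ·) (· ≤ ·))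
    (h2 : GOG.GOG2 (· * ·) (1 : G) (· < ·))
    (h3 : GOG.GOG3 (· * ·) (1 : G) (·⁻¹) (· < ·) (· ≤ ·))
    (N : Subgroup G)
    (hinit : ∀ f ∈ N, ∀ g : G, GOG.Preceq (· * ·) (1 : G) (· ≤ ·) g f → g ∈ N) :
    (∀ a ∈ N, ∀ b ∈ N, ∀ c : G, a ≤ c → c ≤ b → c ∈ N) ∧
    GOG.IsGrowthOrderGroup ((· * ·) : N → N → N) (1 : N)
      ((·⁻¹) : N → N) ((· < ·) : N → N → Prop) ((· ≤ ·) : N → N → Prop) := by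
  have hN : GOG.IsPreceqInitial N := hinit
  exact ⟨fun a ha b hb c hac hcb => hN.ordConnected.out ha hb ⟨hac, hcb⟩,
    GOG.isOrderedGroup, hN.gog1 h1, hN.gog2 h2, hN.gog3 h3⟩
end

section
/- Let K be an H-field with composition (over C = Ker ∂) satisfying axioms HFC1–HFC5. Then for all a ∈ K and b ∈ K^{>C}, the chain rule holds: (a ∘ b)' = (a' ∘ b) · b'. -/
/-!
Write `A = a ∘ b` and expand both sides of `a ∘ (b ∘ (x + δ)) = (a ∘ b) ∘ (x + δ)` to second order
with HFC5: `A` and `b` at `x` (where `· ∘ x` is the identity), and `a` at `b` with increment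
`δ₁ = b ∘ (x + δ) - b = b' δ + O(δ²)`. Comparing the linear terms gives
`|A' - (a' ∘ b) b'| ≤ M δ` with `M` independent of `δ`. HF1 applied to `x` produces a nonzero
infinitesimal, so `δ > 0` can be taken infinitesimal relative to finitely many given elements, in
particular so small that `M δ < |A' - (a' ∘ b) b'|` unless that difference vanishes.
-/

namespace HField

variable {K : Type*} [Field K]

/-- `z ∈ o(1)`. -/
def Infinitesimal (O : Subring K) (z : K) : Prop := z = 0 ∨ z⁻¹ ∉ O

/-- `z ∈ o(w)`. -/
def IsLittleO (O : Subring K) (z w : K) : Prop := ∃ ε, Infinitesimal O ε ∧ z = ε * w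

theorem exists_infinitesimal_ne_zero {O : Subring K} {der : K → K}
    (hf1 : ∀ a ∈ O, ∃ c : K, der c = 0 ∧ Infinitesimal O (a - c)) {x : K} (hx : der x ≠ 0) :
    ∃ μ : K, μ ≠ 0 ∧ Infinitesimal O μ := by
  obtain ⟨y, hy⟩ : ∃ y, y ∉ O := by
    by_contra! hall
    obtain ⟨c, hc, hxc | hxc⟩ := hf1 x (hall x)
    · exact hx (by rwa [sub_eq_zero.mp hxc])
    · exact hxc (hall _)
  exact ⟨y⁻¹, inv_ne_zero fun h => hy (h ▸ O.zero_mem), Or.inr (by rwa [inv_inv])⟩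

variable [LinearOrder K]

def IsConvex (O : Subring K) : Prop := ∀ a b : K, a ∈ O → |b| ≤ |a| → b ∈ O

/-- `b ∈ K^{>C}`. -/
def AboveConstants (der : K → K) (b : K) : Prop := ∀ c : K, der c = 0 → c < b

/-- Axiom HFC5. -/
def TaylorAxiom (O : Subring K) (der : K → K) (comp : K → K → K) : Prop :=
  ∀ a δ b : K, ∀ n : ℕ, AboveConstants der b → IsLittleO O δ a →
    Infinitesimal O (comp (der a / a) b * δ) →
    IsLittleO O (comp a (b + δ) - ∑ k ∈ Finset.range (n + 1),
        comp (der^[k] a) b / (Nat.factorial k : K) * δ ^ k)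
      (comp (der^[n] a) b * δ ^ n)

variable [IsStrictOrderedRing K] {O : Subring K}

theorem Infinitesimal.abs_lt_one (hO : IsConvex O) {ε : K} (h : Infinitesimal O ε) : |ε| < 1 := by
  rcases h with rfl | h
  · simp
  · by_contra! hge
    exact h (hO 1 ε⁻¹ O.one_mem (by rw [abs_inv, abs_one]; exact inv_le_one_of_one_le₀ hge))

theorem Infinitesimal.of_abs_le (hO : IsConvex O) {z w : K} (hw : Infinitesimal O w)
    (h : |z| ≤ |w|) : Infinitesimal O z := by
  rcases eq_or_ne z 0 with rfl | hz
  · exact Or.inl rfl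
  rcases hw with rfl | hw
  · exact absurd (abs_nonpos_iff.mp (by simpa using h)) hz
  · refine Or.inr fun hmem => hw (hO z⁻¹ w⁻¹ hmem ?_)
    rw [abs_inv, abs_inv]
    exact inv_anti₀ (abs_pos.mpr hz) h

theorem exists_pos_forall_infinitesimal_mul (hO : IsConvex O) {μ : K} (hμ0 : μ ≠ 0)
    (hμ : Infinitesimal O μ) (S : Finset K) :
    ∃ δ > 0, ∀ c ∈ S, Infinitesimal O (c * δ) := by
  set N := 1 + ∑ c ∈ S, |c|
  have hN : 0 < N := by positivity
  refine ⟨|μ| / N, by positivity, fun c hc => hμ.of_abs_le hO ?_⟩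
  have hcN : |c| ≤ N := by linarith [Finset.single_le_sum (fun c _ => abs_nonneg c) hc]
  calc |c * (|μ| / N)| = |c| * (|μ| / N) := by rw [abs_mul, abs_div, abs_abs, abs_of_pos hN]
    _ ≤ N * (|μ| / N) := by gcongr
    _ = |μ| := by field_simp

theorem eq_zero_of_forall_abs_le_mul (hO : IsConvex O) {μ : K} (hμ0 : μ ≠ 0)
    (hμ : Infinitesimal O μ) {u M : K} (S : Finset K)
    (h : ∀ δ > 0, (∀ c ∈ S, Infinitesimal O (c * δ)) → |u| ≤ M * δ) : u = 0 := by
  by_contra hu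
  have hu' : 0 < |u| := abs_pos.mpr hu
  obtain ⟨δ, hδ, hS⟩ := exists_pos_forall_infinitesimal_mul hO hμ0 hμ (insert (M / |u|) S)
  have hsmall : M / |u| * δ < 1 :=
    (le_abs_self _).trans_lt ((hS _ (Finset.mem_insert_self _ _)).abs_lt_one hO)
  have hMδ : M * δ < |u| := by rwa [div_mul_eq_mul_div, div_lt_one hu'] at hsmall
  exact (h δ hδ fun c hc => hS c (Finset.mem_insert_of_mem hc)).not_gt hMδ

theorem taylor_two {der : K → K} {comp : K → K → K} (hT : TaylorAxiom O der comp) {a b δ : K}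
    (ha : a ≠ 0) (hb : AboveConstants der b) (hδa : Infinitesimal O (a⁻¹ * δ))
    (hδ : Infinitesimal O (comp (der a / a) b * δ)) :
    ∃ ε, Infinitesimal O ε ∧ comp a (b + δ) =
      comp a b + comp (der a) b * δ + (1 / 2 + ε) * comp (der (der a)) b * δ ^ 2 := by
  obtain ⟨ε, hε, h⟩ := hT a δ b 2 hb ⟨a⁻¹ * δ, hδa, by field_simp⟩ hδ
  refine ⟨ε, hε, ?_⟩
  norm_num [Finset.sum_range_succ, Nat.factorial] at h
  linear_combination h

theorem abs_half_add_le_two {ε : K} (hε : |ε| < 1) : |1 / 2 + ε| ≤ 2 := by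
  have := abs_add_le (1 / 2 : K) ε
  rw [abs_of_pos (by norm_num : (0 : K) < 1 / 2)] at this
  linarith

theorem abs_add_half_add_mul_le {p q ε δ : K} (hε : |ε| < 1) (hδ : |δ| ≤ 1) :
    |p + (1 / 2 + ε) * q * δ| ≤ |p| + 2 * |q| := by
  have hq : |(1 / 2 + ε) * q * δ| ≤ 2 * |q| := by
    rw [abs_mul, abs_mul]
    calc |1 / 2 + ε| * |q| * |δ| ≤ 2 * |q| * 1 := by
          gcongr
          exact abs_half_add_le_two hε
      _ = 2 * |q| := mul_one _
  linarith [abs_add_le p ((1 / 2 + ε) * q * δ)]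

theorem abs_sub_mul_le_of_second_order {A' A'' a₁ a₂ b' b'' εA εa εb δ : K} (hδ0 : 0 < δ)
    (hδ1 : δ ≤ 1) (hεA : |εA| < 1) (hεa : |εa| < 1) (hεb : |εb| < 1)
    (h : A' * δ + (1 / 2 + εA) * A'' * δ ^ 2 =
      a₁ * ((b' + (1 / 2 + εb) * b'' * δ) * δ) +
        (1 / 2 + εa) * a₂ * ((b' + (1 / 2 + εb) * b'' * δ) * δ) ^ 2) :
    |A' - a₁ * b'| ≤ (2 * |A''| + 2 * |a₁| * |b''| + 2 * |a₂| * (|b'| + 2 * |b''|) ^ 2) * δ := by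
  set Q := b' + (1 / 2 + εb) * b'' * δ
  have hQ : |Q| ≤ |b'| + 2 * |b''| := abs_add_half_add_mul_le hεb (by rwa [abs_of_pos hδ0])
  have hdiff : A' - a₁ * b' = ((1 / 2 + εb) * a₁ * b'' + (1 / 2 + εa) * a₂ * Q ^ 2
      - (1 / 2 + εA) * A'') * δ := by
    refine mul_right_cancel₀ hδ0.ne' ?_
    linear_combination h
  rw [hdiff, abs_mul, abs_of_pos hδ0]
  gcongr
  have hb := abs_half_add_le_two hεb
  have ha := abs_half_add_le_two hεa
  have hA := abs_half_add_le_two hεA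
  calc |(1 / 2 + εb) * a₁ * b'' + (1 / 2 + εa) * a₂ * Q ^ 2 - (1 / 2 + εA) * A''|
      ≤ |1 / 2 + εb| * |a₁| * |b''| + |1 / 2 + εa| * |a₂| * |Q| ^ 2
          + |1 / 2 + εA| * |A''| := by
        simp only [← abs_mul, ← abs_pow]
        exact (abs_sub _ _).trans (add_le_add_left (abs_add_le _ _) _)
    _ ≤ 2 * |a₁| * |b''| + 2 * |a₂| * (|b'| + 2 * |b''|) ^ 2 + 2 * |A''| := by gcongr
    _ = _ := by ring

theorem exists_abs_der_comp_sub_le (hO : IsConvex O) {der : K → K} {comp : K → K → K}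
    (hT : TaylorAxiom O der comp)
    (hassoc : ∀ a b d : K, AboveConstants der b → AboveConstants der d →
      comp a (comp b d) = comp (comp a b) d)
    {x : K} (hx : AboveConstants der x) (hcompx : ∀ a : K, comp a x = a)
    {a b : K} (ha : a ≠ 0) (hA : comp a b ≠ 0) (hb : AboveConstants der b) (hb0 : b ≠ 0) :
    ∃ (M : K) (S : Finset K), ∀ δ > 0, (∀ c ∈ S, Infinitesimal O (c * δ)) →
      |der (comp a b) - comp (der a) b * der b| ≤ M * δ := by
  set A := comp a b
  set B := |der b| + 2 * |der (der b)|
  refine ⟨2 * |der (der A)| + 2 * |comp (der a) b| * |der (der b)|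
      + 2 * |comp (der (der a)) b| * B ^ 2,
    {1, A⁻¹, der A / A, b⁻¹, der b / b, a⁻¹ * B, comp (der a / a) b * B}, fun δ hδ hS => ?_⟩
  simp only [Finset.mem_insert, Finset.mem_singleton, forall_eq_or_imp, forall_eq] at hS
  obtain ⟨h1, hA1, hA2, hb1, hb2, ha1, ha2⟩ := hS
  have hδ1 : δ ≤ 1 := by simpa [abs_of_pos hδ] using (h1.abs_lt_one hO).le
  obtain ⟨εA, hεA, hTA⟩ := taylor_two hT hA hx hA1 (by rw [hcompx]; exact hA2)
  obtain ⟨εb, hεb, hTb⟩ := taylor_two hT hb0 hx hb1 (by rw [hcompx]; exact hb2)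
  simp only [hcompx] at hTA hTb
  set δ₁ := comp b (x + δ) - b
  have hδ₁ : δ₁ = (der b + (1 / 2 + εb) * der (der b) * δ) * δ := by
    simp only [δ₁, hTb]; ring
  have hδ₁B : |δ₁| ≤ B * δ := by
    rw [hδ₁, abs_mul, abs_of_pos hδ]
    gcongr
    exact abs_add_half_add_mul_le (hεb.abs_lt_one hO) (by rwa [abs_of_pos hδ])
  have hsmall {c : K} : |c * δ₁| ≤ |c * B * δ| := by
    rw [abs_mul, mul_assoc, abs_mul, abs_of_nonneg (by positivity : 0 ≤ B * δ)]
    gcongr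
  obtain ⟨εa, hεa, hTa⟩ := taylor_two hT ha hb (ha1.of_abs_le hO hsmall) (ha2.of_abs_le hO hsmall)
  have hxδ : AboveConstants der (x + δ) := fun c hc => (hx c hc).trans (lt_add_of_pos_right x hδ)
  have hcomp := hassoc a b (x + δ) hb hxδ
  rw [show comp b (x + δ) = b + δ₁ by ring, hTa, hTA, hδ₁] at hcomp
  exact abs_sub_mul_le_of_second_order hδ hδ1
    (hεA.abs_lt_one hO) (hεa.abs_lt_one hO) (hεb.abs_lt_one hO) (by linear_combination -hcomp)

end HField

theorem stmt_19_general {K : Type*} [Field K] [LinearOrder K] [IsStrictOrderedRing K]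
    (O : Subring K)
    (hOconv : ∀ a b : K, a ∈ O → |b| ≤ |a| → b ∈ O)
    (der : K → K)
    (hder_add : ∀ a b : K, der (a + b) = der a + der b)
    (x : K) (hx_der : der x = 1) (hx_gtC : ∀ c : K, der c = 0 → c < x)
    -- HF1
    (hf1 : ∀ a ∈ O, ∃ c : K, der c = 0 ∧ (a - c = 0 ∨ (a - c)⁻¹ ∉ O))
    (comp : K → K → K)
    -- HFC1
    (hfc1 : ∀ b : K, (∀ c : K, der c = 0 → c < b) →
      (∀ a a' : K, comp (a + a') b = comp a b + comp a' b) ∧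
      (∀ a a' : K, comp (a * a') b = comp a b * comp a' b) ∧
      comp 1 b = 1 ∧
      (∀ c a : K, der c = 0 → comp (c * a) b = c * comp a b) ∧
      (∀ a a' : K, a ≤ a' → comp a b ≤ comp a' b))
    -- HFC2
    (hfc2 : ∀ a b d : K, (∀ c : K, der c = 0 → c < b) → (∀ c : K, der c = 0 → c < d) →
      comp a (comp b d) = comp (comp a b) d)
    -- HFC4
    (hfc4x : ∀ a : K, comp a x = a)
    -- HFC5 (Taylor expansions)
    (hfc5 : ∀ a δ b : K, ∀ n : ℕ, (∀ c : K, der c = 0 → c < b) →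
      (∃ ε : K, (ε = 0 ∨ ε⁻¹ ∉ O) ∧ δ = ε * a) →
      (comp (der a / a) b * δ = 0 ∨ (comp (der a / a) b * δ)⁻¹ ∉ O) →
      ∃ ε : K, (ε = 0 ∨ ε⁻¹ ∉ O) ∧
        comp a (b + δ) - (∑ k ∈ Finset.range (n + 1),
          comp (der^[k] a) b / (Nat.factorial k : K) * δ ^ k)
          = ε * (comp (der^[n] a) b * δ ^ n)) :
    ∀ a b : K, (∀ c : K, der c = 0 → c < b) →
      der (comp a b) = comp (der a) b * der b := by
  intro a b hb
  obtain ⟨hadd, hmul, hone, -, -⟩ := hfc1 b hb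
  have hder0 : der 0 = 0 := (AddMonoidHom.mk' der hder_add).map_zero
  rcases eq_or_ne a 0 with rfl | ha
  · have hcomp0 : comp 0 b = 0 := (AddMonoidHom.mk' (comp · b) hadd).map_zero
    rw [hcomp0, hder0, hcomp0, zero_mul]
  have hA : comp a b ≠ 0 :=
    left_ne_zero_of_mul_eq_one (by rw [← hmul, mul_inv_cancel₀ ha, hone])
  obtain ⟨μ, hμ0, hμ⟩ := HField.exists_infinitesimal_ne_zero hf1 (x := x) (by simp [hx_der])
  obtain ⟨M, S, hMS⟩ := HField.exists_abs_der_comp_sub_le hOconv hfc5 hfc2 hx_gtC hfc4x ha hA hb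
    (hb 0 hder0).ne'
  exact sub_eq_zero.mp (HField.eq_zero_of_forall_abs_le_mul hOconv hμ0 hμ S hMS)

theorem stmt_19 {K : Type*} [Field K] [LinearOrder K] [IsStrictOrderedRing K]
    (O : Subring K)
    (hOconv : ∀ a b : K, a ∈ O → |b| ≤ |a| → b ∈ O)
    (hOval : ∀ a : K, a ∈ O ∨ a⁻¹ ∈ O)
    (der : K → K)
    (hder_add : ∀ a b : K, der (a + b) = der a + der b)
    (hder_mul : ∀ a b : K, der (a * b) = der a * b + a * der b)
    (x : K) (hx_der : der x = 1) (hx_gtC : ∀ c : K, der c = 0 → c < x)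
    -- HF1
    (hf1 : ∀ a ∈ O, ∃ c : K, der c = 0 ∧ (a - c = 0 ∨ (a - c)⁻¹ ∉ O))
    -- HF2
    (hf2 : ∀ a : K, (∀ c : K, der c = 0 → c < a) → 0 < der a)
    (comp : K → K → K)
    -- HFC1
    (hfc1 : ∀ b : K, (∀ c : K, der c = 0 → c < b) →
      (∀ a a' : K, comp (a + a') b = comp a b + comp a' b) ∧
      (∀ a a' : K, comp (a * a') b = comp a b * comp a' b) ∧
      comp 1 b = 1 ∧
      (∀ c a : K, der c = 0 → comp (c * a) b = c * comp a b) ∧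
      (∀ a a' : K, a ≤ a' → comp a b ≤ comp a' b))
    -- HFC2
    (hfc2 : ∀ a b d : K, (∀ c : K, der c = 0 → c < b) → (∀ c : K, der c = 0 → c < d) →
      comp a (comp b d) = comp (comp a b) d)
    -- HFC3
    (hfc3 : ∀ a : K, (∀ c : K, der c = 0 → c < a) → ∀ b b' : K,
      (∀ c : K, der c = 0 → c < b) → (∀ c : K, der c = 0 → c < b') →
      b < b' → comp a b < comp a b')
    -- HFC4
    (hfc4x : ∀ a : K, comp a x = a)
    (hfc4b : ∀ b : K, (∀ c : K, der c = 0 → c < b) → comp x b = b)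
    -- HFC5 (Taylor expansions)
    (hfc5 : ∀ a δ b : K, ∀ n : ℕ, (∀ c : K, der c = 0 → c < b) →
      (∃ ε : K, (ε = 0 ∨ ε⁻¹ ∉ O) ∧ δ = ε * a) →
      (comp (der a / a) b * δ = 0 ∨ (comp (der a / a) b * δ)⁻¹ ∉ O) →
      ∃ ε : K, (ε = 0 ∨ ε⁻¹ ∉ O) ∧
        comp a (b + δ) - (∑ k ∈ Finset.range (n + 1),
          comp (der^[k] a) b / (Nat.factorial k : K) * δ ^ k)
          = ε * (comp (der^[n] a) b * δ ^ n)) :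
    ∀ a b : K, (∀ c : K, der c = 0 → c < b) →
      der (comp a b) = comp (der a) b * der b :=
  stmt_19_general O hOconv der hder_add x hx_der hx_gtC hf1 comp hfc1 hfc2 hfc4x hfc5
end
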